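/- arXiv:2203.09045 — 2 statements merged into one kernel-verified Lean document; each statement's English description precedes it below -/
import Mathlib

section
/- If K is a compact subset of δX, then K ∩ X is hard in X; consequently, if H is a closed set in X with cl_{δX} H compact in δX, then H is hard in X. -/
open Set Topology

variable {X : Type*}

def IsZeroSet [TopologicalSpace X] (Z : Set X) : Prop :=
  ∃ f : X → ℝ, Continuous f ∧ Z = {x | f x = 0}

def IsZFilter [TopologicalSpace X] (F : Set (Set X)) : Prop :=
  (∀ Z ∈ F, IsZeroSet Z) ∧ (∅ : Set X) ∉ F ∧ Set.univ ∈ F ∧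
  (∀ Z₁ ∈ F, ∀ Z₂ ∈ F, Z₁ ∩ Z₂ ∈ F) ∧
  (∀ Z₁ ∈ F, ∀ Z₂ : Set X, IsZeroSet Z₂ → Z₁ ⊆ Z₂ → Z₂ ∈ F)

def IsZUltrafilter [TopologicalSpace X] (F : Set (Set X)) : Prop :=
  IsZFilter F ∧ ∀ G : Set (Set X), IsZFilter G → F ⊆ G → G = F

def IsPrimeZFilter [TopologicalSpace X] (F : Set (Set X)) : Prop :=
  IsZFilter F ∧ ∀ Z₁ Z₂ : Set X, IsZeroSet Z₁ → IsZeroSet Z₂ → Z₁ ∪ Z₂ ∈ F →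
    Z₁ ∈ F ∨ Z₂ ∈ F

def HasCIP (F : Set (Set X)) : Prop :=
  ∀ s : ℕ → Set X, (∀ n, s n ∈ F) → (⋂ n, s n).Nonempty

def IsFixedFamily (F : Set (Set X)) : Prop := (⋂₀ F).Nonempty

def IsRealcompact (Y : Type*) [TopologicalSpace Y] : Prop :=
  ∀ F : Set (Set Y), IsZUltrafilter F → HasCIP F → IsFixedFamily F

def CompletelySeparated [TopologicalSpace X] (A B : Set X) : Prop :=
  ∃ f : X → ℝ, Continuous f ∧ (∀ x ∈ A, f x = 0) ∧ (∀ x ∈ B, f x = 1)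

def IsHard [TopologicalSpace X] (H : Set X) : Prop :=
  IsClosed H ∧ ∃ K : Set X, IsCompact K ∧ ∀ V : Set X, IsOpen V → K ⊆ V →
    ∃ P : Set X, IsRealcompact ↥P ∧ CompletelySeparated (H \ V) Pᶜ

def IsPseudocompact (Y : Type*) [TopologicalSpace Y] : Prop :=
  ∀ f : Y → ℝ, Continuous f → ∃ M : ℝ, ∀ y, |f y| ≤ M

def NearlyPseudocompact (Y : Type*) [TopologicalSpace Y] : Prop :=
  ∃ X₁ X₂ : Set Y, X₁ ∪ X₂ = Set.univ ∧
    X₁ = closure (interior X₁) ∧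
    X₁ = closure {y : Y | ∃ K : Set Y, IsCompact K ∧ K ∈ nhds y} ∧
    IsPseudocompact ↥X₁ ∧
    X₂ = closure (interior X₂) ∧
    (∀ y ∈ X₂, ¬ ∃ N ∈ nhds y, IsRealcompact ↥N) ∧
    interior (X₁ ∩ X₂) = (∅ : Set Y)

def IsHZFilter [TopologicalSpace X] (F : Set (Set X)) : Prop :=
  IsZFilter F ∧ ∀ Z ∈ F, ∃ H ∈ F, IsHard H ∧ H ⊆ Z

def IsHZUltrafilter [TopologicalSpace X] (F : Set (Set X)) : Prop :=
  IsZUltrafilter F ∧ ∃ H ∈ F, IsHard H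

def deltaX (X : Type*) [TopologicalSpace X] : Type _ :=
  {F : Set (Set X) // IsZUltrafilter F ∧ (IsFixedFamily F ∨ ∃ H ∈ F, IsHard H)}

def deltaCl [TopologicalSpace X] (Z : Set X) : Set (deltaX X) :=
  {p | Z ∈ p.1}

instance [TopologicalSpace X] : TopologicalSpace (deltaX X) :=
  TopologicalSpace.generateFrom {U | ∃ Z : Set X, IsZeroSet Z ∧ U = (deltaCl Z)ᶜ}

def pointUltra [TopologicalSpace X] (x : X) : Set (Set X) :=
  {Z | IsZeroSet Z ∧ x ∈ Z}
section ZeroBasics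

variable [TopologicalSpace X]

lemma isZeroSet_univ : IsZeroSet (Set.univ : Set X) :=
  ⟨fun _ => 0, continuous_const, by ext x; simp⟩

lemma isZeroSet_empty : IsZeroSet (∅ : Set X) :=
  ⟨fun _ => 1, continuous_const, by ext x; simp⟩

lemma IsZeroSet.isClosed {Z : Set X} (h : IsZeroSet Z) : IsClosed Z := by
  obtain ⟨f, hf, rfl⟩ := h
  exact isClosed_eq hf continuous_const

lemma IsZeroSet.inter {Z W : Set X} (hZ : IsZeroSet Z) (hW : IsZeroSet W) :
    IsZeroSet (Z ∩ W) := by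
  obtain ⟨f, hf, rfl⟩ := hZ
  obtain ⟨g, hg, rfl⟩ := hW
  refine ⟨fun x => |f x| + |g x|, (hf.abs).add (hg.abs), ?_⟩
  ext x
  simp only [mem_inter_iff, mem_setOf_eq]
  constructor
  · rintro ⟨h1, h2⟩; simp [h1, h2]
  · intro h
    have h1 : |f x| = 0 ∧ |g x| = 0 :=
      (add_eq_zero_iff_of_nonneg (abs_nonneg _) (abs_nonneg _)).mp h
    exact ⟨abs_eq_zero.mp h1.1, abs_eq_zero.mp h1.2⟩

lemma IsZeroSet.union {Z W : Set X} (hZ : IsZeroSet Z) (hW : IsZeroSet W) :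
    IsZeroSet (Z ∪ W) := by
  obtain ⟨f, hf, rfl⟩ := hZ
  obtain ⟨g, hg, rfl⟩ := hW
  exact ⟨fun x => f x * g x, hf.mul hg, by ext x; simp [mul_eq_zero]⟩

lemma IsZeroSet.preimage {Y : Type*} [TopologicalSpace Y] {Z : Set Y} (h : IsZeroSet Z)
    {u : X → Y} (hu : Continuous u) : IsZeroSet (u ⁻¹' Z) := by
  obtain ⟨f, hf, rfl⟩ := h
  exact ⟨f ∘ u, hf.comp hu, rfl⟩

lemma isZeroSet_le {f : X → ℝ} (hf : Continuous f) (c : ℝ) :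
    IsZeroSet {x | f x ≤ c} := by
  refine ⟨fun x => max (f x - c) 0, (hf.sub continuous_const).max continuous_const, ?_⟩
  ext x
  simp only [mem_setOf_eq]
  constructor
  · intro h; exact max_eq_right (by linarith)
  · intro h
    have := max_eq_right_iff.mp h
    linarith

lemma isZeroSet_ge {f : X → ℝ} (hf : Continuous f) (c : ℝ) :
    IsZeroSet {x | c ≤ f x} := by
  have := isZeroSet_le (hf.neg) (-c)
  convert this using 1
  ext x; simp only [mem_setOf_eq, Pi.neg_apply]; constructor <;> intro <;> linarith

lemma isZeroSet_iInter {s : ℕ → Set X} (h : ∀ n, IsZeroSet (s n)) :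
    IsZeroSet (⋂ n, s n) := by
  choose f hf hfs using h
  set g : ℕ → X → ℝ := fun n x => (1/2 : ℝ) ^ n * min |f n x| 1 with hg
  have hbound : ∀ n x, ‖g n x‖ ≤ (1/2 : ℝ) ^ n := by
    intro n x
    rw [Real.norm_eq_abs, hg]
    have h0 : (0:ℝ) ≤ min |f n x| 1 := le_min (abs_nonneg _) zero_le_one
    have h1 : min |f n x| 1 ≤ 1 := min_le_right _ _
    rw [abs_mul, abs_of_nonneg (by positivity : (0:ℝ) ≤ (1/2:ℝ)^n), abs_of_nonneg h0]
    nlinarith [pow_pos (by norm_num : (0:ℝ) < 1/2) n]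
  have hgc : ∀ n, Continuous (g n) := fun n =>
    continuous_const.mul (((hf n).abs).min continuous_const)
  have hsum : Continuous fun x => ∑' n, g n x :=
    continuous_tsum hgc summable_geometric_two hbound
  refine ⟨fun x => ∑' n, g n x, hsum, ?_⟩
  ext x
  have hsummable : Summable (fun n => g n x) :=
    Summable.of_norm_bounded summable_geometric_two (fun n => hbound n x)
  have hnonneg : ∀ n, 0 ≤ g n x := by
    intro n
    exact mul_nonneg (by positivity) (le_min (abs_nonneg _) zero_le_one)
  simp only [mem_iInter, mem_setOf_eq]
  constructor
  · intro h
    have : ∀ n, g n x = 0 := by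
      intro n
      have : f n x = 0 := by
        have := h n; rw [hfs n] at this; exact this
      simp [hg, this]
    simp [tsum_congr (fun n => this n)]
  · intro h n
    rw [hfs n]
    by_contra hne
    have hpos : 0 < g n x := by
      have : 0 < |f n x| := abs_pos.mpr hne
      exact mul_pos (by positivity) (lt_min this one_pos)
    have hle : g n x ≤ ∑' m, g m x :=
      Summable.le_tsum hsummable n (fun m _ => hnonneg m)
    rw [h] at hle
    linarith

end ZeroBasics

section ZFilterLemmas

variable [TopologicalSpace X]

lemma mem_zultra_of_meets {F : Set (Set X)} (hF : IsZUltrafilter F) {Z : Set X}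
    (hZ : IsZeroSet Z) (hmeet : ∀ W ∈ F, (Z ∩ W).Nonempty) : Z ∈ F := by
  obtain ⟨⟨hzero, hemp, huniv, hinter, hup⟩, hmax⟩ := hF
  set G : Set (Set X) := {W' | IsZeroSet W' ∧ ∃ W ∈ F, Z ∩ W ⊆ W'} with hG
  have hGF : IsZFilter G := by
    refine ⟨fun W' hW' => hW'.1, ?_, ⟨isZeroSet_univ, univ, huniv, subset_univ _⟩, ?_, ?_⟩
    · rintro ⟨-, W, hW, hsub⟩
      exact absurd (Set.subset_empty_iff.mp hsub) (hmeet W hW).ne_empty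
    · rintro W₁ ⟨hz1, V₁, hV₁, hs1⟩ W₂ ⟨hz2, V₂, hV₂, hs2⟩
      refine ⟨hz1.inter hz2, V₁ ∩ V₂, hinter _ hV₁ _ hV₂, ?_⟩
      intro x hx
      exact ⟨hs1 ⟨hx.1, hx.2.1⟩, hs2 ⟨hx.1, hx.2.2⟩⟩
    · rintro W₁ ⟨hz1, V₁, hV₁, hs1⟩ W₂ hz2 hsub
      exact ⟨hz2, V₁, hV₁, hs1.trans hsub⟩
  have hsub : F ⊆ G := fun W hW =>
    ⟨hzero W hW, W, hW, inter_subset_right⟩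
  have : G = F := hmax G hGF hsub
  rw [← this]
  exact ⟨hZ, univ, huniv, by simp⟩

lemma not_mem_zultra_iff_disj {F : Set (Set X)} (hF : IsZUltrafilter F) {Z : Set X}
    (hZ : IsZeroSet Z) (hnot : Z ∉ F) : ∃ W ∈ F, Z ∩ W = ∅ := by
  by_contra h
  push_neg at h
  exact hnot (mem_zultra_of_meets hF hZ h)

lemma zultra_prime {F : Set (Set X)} (hF : IsZUltrafilter F) {Z₁ Z₂ : Set X}
    (h1 : IsZeroSet Z₁) (h2 : IsZeroSet Z₂) (hmem : Z₁ ∪ Z₂ ∈ F) :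
    Z₁ ∈ F ∨ Z₂ ∈ F := by
  by_cases hZ1 : Z₁ ∈ F
  · exact Or.inl hZ1
  · obtain ⟨W, hW, hdisj⟩ := not_mem_zultra_iff_disj hF h1 hZ1
    right
    have hWmem : W ∩ (Z₁ ∪ Z₂) ∈ F := hF.1.2.2.2.1 _ hW _ hmem
    refine hF.1.2.2.2.2 _ hWmem _ h2 ?_
    intro x ⟨hxW, hxU⟩
    rcases hxU with hx1 | hx2
    · exact absurd (by exact ⟨hx1, hxW⟩ : x ∈ Z₁ ∩ W) (by simp [hdisj])
    · exact hx2

lemma isZeroSet_biUnion_finset {ι : Type*} (t : Finset ι) (A : ι → Set X)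
    (hz : ∀ i ∈ t, IsZeroSet (A i)) : IsZeroSet (⋃ i ∈ t, A i) := by
  classical
  induction t using Finset.induction_on with
  | empty => simpa using isZeroSet_empty
  | @insert b u hb ih =>
    rw [Finset.set_biUnion_insert]
    exact (hz b (Finset.mem_insert_self _ _)).union
      (ih (fun i hi => hz i (Finset.mem_insert_of_mem hi)))

lemma zultra_prime_finset {F : Set (Set X)} (hF : IsZUltrafilter F) {ι : Type*}
    (t : Finset ι) (A : ι → Set X) (hz : ∀ i ∈ t, IsZeroSet (A i))
    (hmem : (⋃ i ∈ t, A i) ∈ F) : ∃ i ∈ t, A i ∈ F := by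
  classical
  induction t using Finset.induction_on with
  | empty =>
    simp only [Finset.notMem_empty, iUnion_of_empty, iUnion_empty] at hmem
    exact absurd hmem hF.1.2.1
  | @insert a s ha ih =>
    have hzs : ∀ i ∈ s, IsZeroSet (A i) := fun i hi => hz i (Finset.mem_insert_of_mem hi)
    have hzU : IsZeroSet (⋃ i ∈ s, A i) := isZeroSet_biUnion_finset s A hzs
    rw [Finset.set_biUnion_insert] at hmem
    rcases zultra_prime hF (hz a (Finset.mem_insert_self _ _)) hzU hmem with h | h
    · exact ⟨a, Finset.mem_insert_self _ _, h⟩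
    · obtain ⟨i, hi, hAi⟩ := ih hzs h
      exact ⟨i, Finset.mem_insert_of_mem hi, hAi⟩

lemma zultra_cip_iInter {F : Set (Set X)} (hF : IsZUltrafilter F) (hcip : HasCIP F)
    {s : ℕ → Set X} (hs : ∀ n, s n ∈ F) : (⋂ n, s n) ∈ F := by
  have hz : IsZeroSet (⋂ n, s n) := isZeroSet_iInter (fun n => hF.1.1 _ (hs n))
  refine mem_zultra_of_meets hF hz (fun W hW => ?_)
  have : (⋂ n, s n) ∩ W = ⋂ n, (s n ∩ W) := by
    ext x
    simp only [mem_inter_iff, mem_iInter]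
    exact ⟨fun ⟨h1, h2⟩ i => ⟨h1 i, h2⟩, fun h => ⟨fun i => (h i).1, (h 0).2⟩⟩
  rw [this]
  exact hcip _ (fun n => hF.1.2.2.2.1 _ (hs n) _ hW)

/-- R0 : a prime, countably-intersection-closed z-filter is a z-ultrafilter. -/
lemma zultra_of_prime_cntclosed {G : Set (Set X)} (hG : IsZFilter G)
    (hprime : ∀ Z₁ Z₂ : Set X, IsZeroSet Z₁ → IsZeroSet Z₂ → Z₁ ∪ Z₂ ∈ G → Z₁ ∈ G ∨ Z₂ ∈ G)
    (hcnt : ∀ s : ℕ → Set X, (∀ n, s n ∈ G) → (⋂ n, s n) ∈ G) :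
    IsZUltrafilter G := by
  refine ⟨hG, fun G₂ hG₂ hsub => ?_⟩
  apply Subset.antisymm _ hsub
  intro Z' hZ'
  obtain ⟨h, hh, rfl⟩ := hG₂.1 _ hZ'
  set C : ℕ → Set X := fun n => {x | |h x| ≤ 1 / (n + 1)} with hC
  set B : ℕ → Set X := fun n => {x | 1 / (n + 2) ≤ |h x|} with hB
  have hCz : ∀ n, IsZeroSet (C n) := fun n => isZeroSet_le hh.abs _
  have hBz : ∀ n, IsZeroSet (B n) := fun n => isZeroSet_ge hh.abs _
  have hCB : ∀ n, C n ∪ B n = univ := by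
    intro n
    ext x
    simp only [hC, hB, mem_union, mem_setOf_eq, mem_univ, iff_true]
    by_cases hx : |h x| ≤ 1 / (n + 1)
    · exact Or.inl hx
    · right
      push_neg at hx
      have h1 : (0:ℝ) < n + 1 := by positivity
      have h2 : (0:ℝ) < n + 2 := by positivity
      have : (1:ℝ) / (n + 2) ≤ 1 / (n + 1) := by
        apply div_le_div_of_nonneg_left one_pos.le h1
        linarith
      linarith
  have hCmem : ∀ n, C n ∈ G := by
    intro n
    rcases hprime (C n) (B n) (hCz n) (hBz n) (by rw [hCB n]; exact hG.2.2.1) with hc | hc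
    · exact hc
    · exfalso
      have hBG2 : B n ∈ G₂ := hsub hc
      have : B n ∩ {x | h x = 0} ∈ G₂ := hG₂.2.2.2.1 _ hBG2 _ hZ'
      have hempty : B n ∩ {x | h x = 0} = ∅ := by
        ext x
        simp only [hB, mem_inter_iff, mem_setOf_eq, mem_empty_iff_false, iff_false, not_and]
        intro hx1 hx2
        rw [hx2] at hx1
        simp at hx1
        have : (0:ℝ) < 1 / (n+2) := by positivity
        linarith
      rw [hempty] at this
      exact hG₂.2.1 this
  have hinter : (⋂ n, C n) ∈ G := hcnt _ hCmem
  have : (⋂ n, C n) = {x | h x = 0} := by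
    ext x
    simp only [mem_iInter, hC, mem_setOf_eq]
    constructor
    · intro hall
      by_contra hne
      have hpos : 0 < |h x| := abs_pos.mpr hne
      obtain ⟨n, hn⟩ := exists_nat_one_div_lt hpos
      have := hall n
      push_cast at hn this
      linarith
    · intro h0 n
      rw [h0]
      simp
      positivity
  rwa [this] at hinter

end ZFilterLemmas

section CRHelpers

lemma cr_sep {Y : Type*} [TopologicalSpace Y] [CompletelyRegularSpace Y] {K : Set Y} {x : Y}
    (hK : IsClosed K) (hx : x ∉ K) :
    ∃ f : Y → ℝ, Continuous f ∧ f x = 0 ∧ (∀ y ∈ K, f y = 1) ∧ ∀ y, f y ∈ Icc (0:ℝ) 1 := by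
  obtain ⟨g, hg, hg0, hg1⟩ := CompletelyRegularSpace.completely_regular x K hK hx
  refine ⟨fun y => (g y : ℝ), continuous_subtype_val.comp hg, ?_, ?_, fun y => (g y).2⟩
  · show ((g x : ℝ)) = 0
    rw [hg0]; rfl
  · intro y hy
    show ((g y : ℝ)) = 1
    rw [hg1 hy]; rfl

lemma exists_zero_superset {Y : Type*} [TopologicalSpace Y] [CompletelyRegularSpace Y]
    {K : Set Y} {y : Y} (hK : IsClosed K) (hy : y ∉ K) :
    ∃ Z : Set Y, IsZeroSet Z ∧ K ⊆ Z ∧ y ∉ Z := by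
  obtain ⟨f, hf, hf0, hf1, -⟩ := cr_sep hK hy
  refine ⟨{z | 1 ≤ f z}, isZeroSet_ge hf 1, fun z hz => by simp [hf1 z hz], ?_⟩
  simp [hf0]

lemma cr_subtype {Y : Type*} [TopologicalSpace Y] [CompletelyRegularSpace Y] (S : Set Y) :
    CompletelyRegularSpace ↥S := by
  constructor
  intro x K hK hx
  obtain ⟨D, hD, hDK⟩ := isClosed_induced_iff.mp hK
  have hxD : (x : Y) ∉ D := fun h => hx (by rw [← hDK]; exact h)
  obtain ⟨f, hf, hf0, hf1⟩ := CompletelyRegularSpace.completely_regular (x : Y) D hD hxD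
  exact ⟨f ∘ Subtype.val, hf.comp continuous_subtype_val, hf0,
    fun k hk => hf1 (by rw [← hDK] at hk; exact hk)⟩

end CRHelpers

section RealcompactBasics

lemma isRealcompact_of_isEmpty {Y : Type*} [TopologicalSpace Y] [IsEmpty Y] :
    IsRealcompact Y := by
  intro F hF _
  exfalso
  have h1 := hF.1.2.2.1
  have h2 := hF.1.2.1
  rw [Set.univ_eq_empty_iff.mpr ‹IsEmpty Y›] at h1
  exact h2 h1

lemma IsRealcompact.of_homeomorph {Y Z : Type*} [TopologicalSpace Y] [TopologicalSpace Z]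
    (e : Y ≃ₜ Z) (hY : IsRealcompact Y) : IsRealcompact Z := by
  intro F hF hcip
  set F' : Set (Set Y) := {S | e.symm ⁻¹' S ∈ F} with hF'def
  have hpre : ∀ S : Set Y, e ⁻¹' (e.symm ⁻¹' S) = S := by
    intro S; ext y; simp
  have hpre2 : ∀ T : Set Z, e.symm ⁻¹' (e ⁻¹' T) = T := by
    intro T; ext z; simp
  have hF'zf : IsZFilter F' := by
    refine ⟨?_, ?_, ?_, ?_, ?_⟩
    · intro S hS
      have hz : IsZeroSet (e.symm ⁻¹' S) := hF.1.1 _ hS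
      have := hz.preimage e.continuous
      rwa [hpre S] at this
    · intro h
      simp only [hF'def, mem_setOf_eq, preimage_empty] at h
      exact hF.1.2.1 h
    · simp only [hF'def, mem_setOf_eq, preimage_univ]
      exact hF.1.2.2.1
    · intro S₁ h1 S₂ h2
      simp only [hF'def, mem_setOf_eq, preimage_inter] at *
      exact hF.1.2.2.2.1 _ h1 _ h2
    · intro S₁ h1 S₂ hz2 hsub
      simp only [hF'def, mem_setOf_eq] at *
      exact hF.1.2.2.2.2 _ h1 _ (hz2.preimage e.symm.continuous) (preimage_mono hsub)
  have hF'ultra : IsZUltrafilter F' := by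
    refine ⟨hF'zf, fun G' hG' hsub => ?_⟩
    set G : Set (Set Z) := {T | e ⁻¹' T ∈ G'} with hGdef
    have hGzf : IsZFilter G := by
      refine ⟨?_, ?_, ?_, ?_, ?_⟩
      · intro T hT
        have hz : IsZeroSet (e ⁻¹' T) := hG'.1 _ hT
        have := hz.preimage e.symm.continuous
        rwa [hpre2 T] at this
      · intro h
        simp only [hGdef, mem_setOf_eq, preimage_empty] at h
        exact hG'.2.1 h
      · simp only [hGdef, mem_setOf_eq, preimage_univ]
        exact hG'.2.2.1
      · intro T₁ h1 T₂ h2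
        simp only [hGdef, mem_setOf_eq, preimage_inter] at *
        exact hG'.2.2.2.1 _ h1 _ h2
      · intro T₁ h1 T₂ hz2 hsub2
        simp only [hGdef, mem_setOf_eq] at *
        exact hG'.2.2.2.2 _ h1 _ (hz2.preimage e.continuous) (preimage_mono hsub2)
    have hFG : F ⊆ G := by
      intro T hT
      have : e ⁻¹' T ∈ F' := by
        simp only [hF'def, mem_setOf_eq, hpre2 T]
        exact hT
      exact hsub this
    have hGF : G = F := hF.2 G hGzf hFG
    apply Subset.antisymm _ hsub
    intro S hS
    have : e ⁻¹' (e.symm ⁻¹' S) ∈ G' := by rw [hpre S]; exact hS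
    have : e.symm ⁻¹' S ∈ G := this
    rw [hGF] at this
    exact this
  have hF'cip : HasCIP F' := by
    intro s hs
    have : (⋂ n, e.symm ⁻¹' (s n)).Nonempty := hcip _ (fun n => hs n)
    obtain ⟨z, hz⟩ := this
    exact ⟨e.symm z, by simpa [mem_iInter] using hz⟩
  obtain ⟨y, hy⟩ := hY F' hF'ultra hF'cip
  refine ⟨e y, fun T hT => ?_⟩
  have : e ⁻¹' T ∈ F' := by
    simp only [hF'def, mem_setOf_eq, hpre2 T]
    exact hT
  exact hy _ this

def nestedHomeo {Y : Type*} [TopologicalSpace Y] {A T : Set Y} (hAT : A ⊆ T) :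
    ↥(Subtype.val ⁻¹' A : Set ↥T) ≃ₜ ↥A where
  toFun q := ⟨(q.1 : Y), q.2⟩
  invFun a := ⟨⟨a.1, hAT a.2⟩, a.2⟩
  left_inv q := by ext; rfl
  right_inv a := by ext; rfl
  continuous_toFun := (continuous_subtype_val.comp continuous_subtype_val).subtype_mk _
  continuous_invFun := (continuous_subtype_val.subtype_mk _).subtype_mk _

/-- a closed subspace of a realcompact space is realcompact -/
lemma isRealcompact_closed_subset {Y : Type*} [TopologicalSpace Y] [CompletelyRegularSpace Y]
    (hY : IsRealcompact Y) {A : Set Y} (hA : IsClosed A) : IsRealcompact ↥A := by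
  intro F hF hcip
  set G : Set (Set Y) := {Z | IsZeroSet Z ∧ ∃ W ∈ F, Subtype.val '' W ⊆ Z} with hGdef
  have hne : ∀ W ∈ F, W.Nonempty := by
    intro W hW
    rcases W.eq_empty_or_nonempty with h | h
    · exact absurd (h ▸ hW) hF.1.2.1
    · exact h
  have hGzf : IsZFilter G := by
    refine ⟨fun Z hZ => hZ.1, ?_, ⟨isZeroSet_univ, univ, hF.1.2.2.1, subset_univ _⟩, ?_, ?_⟩
    · rintro ⟨-, W, hW, hsub⟩
      obtain ⟨w, hw⟩ := hne W hW
      exact absurd (hsub ⟨w, hw, rfl⟩) (by simp)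
    · rintro Z₁ ⟨hz1, W₁, hW₁, hs1⟩ Z₂ ⟨hz2, W₂, hW₂, hs2⟩
      refine ⟨hz1.inter hz2, W₁ ∩ W₂, hF.1.2.2.2.1 _ hW₁ _ hW₂, ?_⟩
      rintro y ⟨w, hw, rfl⟩
      exact ⟨hs1 ⟨w, hw.1, rfl⟩, hs2 ⟨w, hw.2, rfl⟩⟩
    · rintro Z₁ ⟨hz1, W₁, hW₁, hs1⟩ Z₂ hz2 hsub
      exact ⟨hz2, W₁, hW₁, hs1.trans hsub⟩
  have hGprime : ∀ Z₁ Z₂ : Set Y, IsZeroSet Z₁ → IsZeroSet Z₂ → Z₁ ∪ Z₂ ∈ G →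
      Z₁ ∈ G ∨ Z₂ ∈ G := by
    rintro Z₁ Z₂ hz1 hz2 ⟨-, W, hW, hsub⟩
    have ht1 : IsZeroSet (Subtype.val ⁻¹' Z₁ : Set ↥A) := hz1.preimage continuous_subtype_val
    have ht2 : IsZeroSet (Subtype.val ⁻¹' Z₂ : Set ↥A) := hz2.preimage continuous_subtype_val
    have hWsub : W ⊆ (Subtype.val ⁻¹' Z₁) ∪ (Subtype.val ⁻¹' Z₂) := by
      intro w hw
      rcases hsub ⟨w, hw, rfl⟩ with h | h
      · exact Or.inl h
      · exact Or.inr h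
    have hmem : (Subtype.val ⁻¹' Z₁) ∪ (Subtype.val ⁻¹' Z₂) ∈ F :=
      hF.1.2.2.2.2 _ hW _ (ht1.union ht2) hWsub
    rcases zultra_prime hF ht1 ht2 hmem with h | h
    · exact Or.inl ⟨hz1, _, h, image_preimage_subset _ _⟩
    · exact Or.inr ⟨hz2, _, h, image_preimage_subset _ _⟩
  have hGcnt : ∀ s : ℕ → Set Y, (∀ n, s n ∈ G) → (⋂ n, s n) ∈ G := by
    intro s hs
    choose hz W hWF hWsub using hs
    refine ⟨isZeroSet_iInter hz, ⋂ n, W n, zultra_cip_iInter hF hcip hWF, ?_⟩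
    rintro y ⟨w, hw, rfl⟩
    simp only [mem_iInter] at hw ⊢
    exact fun n => hWsub n ⟨w, hw n, rfl⟩
  have hGultra : IsZUltrafilter G := zultra_of_prime_cntclosed hGzf hGprime hGcnt
  have hGcip : HasCIP G := by
    intro s hs
    choose hz W hWF hWsub using hs
    obtain ⟨w, hw⟩ := hne _ (zultra_cip_iInter hF hcip hWF)
    simp only [mem_iInter] at hw
    exact ⟨(w : Y), by simp only [mem_iInter]; exact fun n => hWsub n ⟨w, hw n, rfl⟩⟩
  obtain ⟨y, hy⟩ := hY G hGultra hGcip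
  have hyA : y ∈ A := by
    by_contra hyA
    obtain ⟨Z, hZz, hZs, hZy⟩ := exists_zero_superset hA hyA
    have : Z ∈ G := ⟨hZz, univ, hF.1.2.2.1, by
      rintro z ⟨w, -, rfl⟩; exact hZs w.2⟩
    exact hZy (hy _ this)
  refine ⟨⟨y, hyA⟩, ?_⟩
  intro W hW
  by_contra hnW
  have hWclosed : IsClosed (Subtype.val '' W) :=
    hA.isClosedMap_subtype_val _ (hF.1.1 _ hW).isClosed
  have hyW : y ∉ Subtype.val '' W := by
    rintro ⟨w, hw, hwy⟩
    exact hnW (by rwa [show (⟨y, hyA⟩ : ↥A) = w from Subtype.ext hwy.symm])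
  obtain ⟨Z, hZz, hZs, hZy⟩ := exists_zero_superset hWclosed hyW
  exact hZy (hy _ ⟨hZz, W, hW, hZs⟩)

end RealcompactBasics

section ZEmbedding

/-- cozero sets are z-embedded -/
lemma cozero_z_embedded {Y : Type*} [TopologicalSpace Y] {g : Y → ℝ} (hg : Continuous g)
    (W : Set ↥{y | g y ≠ 0}) (hW : IsZeroSet W) :
    ∃ V : Set Y, IsZeroSet V ∧ (Subtype.val ⁻¹' V : Set ↥{y | g y ≠ 0}) = W := by
  obtain ⟨h, hh, rfl⟩ := hW
  classical
  have hupos : ∀ a : ↥{y | g y ≠ 0}, (0:ℝ) < 1 + |h a| := fun a => by positivity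
  let u : ↥{y | g y ≠ 0} → ℝ := fun a => |h a| / (1 + |h a|) * min |g (a : Y)| 1
  have hu : Continuous u := by
    apply Continuous.mul
    · exact (hh.abs).div (continuous_const.add hh.abs) (fun a => (hupos a).ne')
    · exact ((hg.comp continuous_subtype_val).abs).min continuous_const
  let k : Y → ℝ := fun y => if hy : g y ≠ 0 then u ⟨y, hy⟩ else 0
  have hkpos : ∀ (y : Y) (hy : g y ≠ 0), k y = u ⟨y, hy⟩ := fun y hy => dif_pos hy
  have hkneg : ∀ y : Y, g y = 0 → k y = 0 := fun y hy => dif_neg (by simp [hy])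
  have hunn : ∀ a, 0 ≤ u a ∧ u a ≤ |g (a : Y)| := by
    intro a
    have h1 : (0:ℝ) ≤ |h a| / (1 + |h a|) := by positivity
    have h2 : |h a| / (1 + |h a|) ≤ 1 := by
      rw [div_le_one (hupos a)]; linarith [abs_nonneg (h a)]
    have h3 : (0:ℝ) ≤ min |g (a : Y)| 1 := le_min (abs_nonneg _) zero_le_one
    exact ⟨mul_nonneg h1 h3, le_trans (mul_le_of_le_one_left h3 h2) (min_le_left _ _)⟩
  have hbound : ∀ y, |k y| ≤ |g y| := by
    intro y
    by_cases hy : g y ≠ 0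
    · rw [hkpos y hy, abs_of_nonneg (hunn ⟨y, hy⟩).1]
      exact (hunn ⟨y, hy⟩).2
    · push_neg at hy
      rw [hkneg y hy, abs_zero]
      exact abs_nonneg _
  have hCopen : IsOpen {y | g y ≠ 0} := by
    have : {y | g y ≠ 0} = g ⁻¹' {t | t ≠ 0} := rfl
    rw [this]
    exact isOpen_ne.preimage hg
  have hk : Continuous k := by
    rw [continuous_iff_continuousAt]
    intro y₀
    by_cases hy₀ : g y₀ ≠ 0
    · apply ContinuousOn.continuousAt _ (hCopen.mem_nhds hy₀)
      rw [continuousOn_iff_continuous_restrict]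
      have : {y | g y ≠ 0}.restrict k = u := by
        funext a
        exact hkpos (a : Y) a.2
      refine Continuous.congr ?_ (fun a => (congrFun this a).symm)
      exact hu
    · push_neg at hy₀
      have hk0 : k y₀ = 0 := hkneg y₀ hy₀
      unfold ContinuousAt
      rw [hk0]
      have hb2 : ∀ y, ‖k y‖ ≤ |g y| := fun y => by
        rw [Real.norm_eq_abs]; exact hbound y
      have ht : Filter.Tendsto (fun y => |g y|) (𝓝 y₀) (𝓝 0) := by
        have h2 := (hg.abs).continuousAt (x := y₀)
        unfold ContinuousAt at h2
        simpa only [hy₀, abs_zero] using h2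
      exact squeeze_zero_norm hb2 ht
  refine ⟨{y | k y = 0}, ⟨k, hk, rfl⟩, ?_⟩
  ext a
  simp only [mem_preimage, mem_setOf_eq]
  rw [hkpos (a : Y) a.2]
  constructor
  · intro h0
    rcases mul_eq_zero.mp h0 with h1 | h1
    · rcases div_eq_zero_iff.mp h1 with h2 | h2
      · exact abs_eq_zero.mp h2
      · exact absurd h2 (hupos a).ne'
    · exfalso
      have hlt : (0:ℝ) < min |g (a : Y)| 1 := lt_min (abs_pos.mpr a.2) one_pos
      rw [h1] at hlt
      exact lt_irrefl 0 hlt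
  · intro h0
    show |h a| / (1 + |h a|) * min |g (a : Y)| 1 = 0
    rw [h0]
    simp

end ZEmbedding

section UnionLemma

variable {Y : Type*}

/-- finite unions of cozero sets contained in realcompact subsets are realcompact -/
lemma isRealcompact_finite_union_cozero [TopologicalSpace Y] [CompletelyRegularSpace Y]
    {ι : Type*} [Finite ι] (γ : ι → Y → ℝ) (hγ : ∀ i, Continuous (γ i)) (R : ι → Set Y)
    (hCR : ∀ i, {x | γ i x ≠ 0} ⊆ R i) (hR : ∀ i, IsRealcompact ↥(R i)) :
    IsRealcompact ↥(⋃ i, {x | γ i x ≠ 0}) := by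
  set P : Set Y := ⋃ i, {x | γ i x ≠ 0} with hPdef
  intro F hF hcip
  by_cases hE : IsEmpty ↥P
  · exfalso
    have h1 := hF.1.2.2.1
    rw [Set.univ_eq_empty_iff.mpr hE] at h1
    exact hF.1.2.1 h1
  have hNE : Nonempty ↥P := not_isEmpty_iff.mp hE
  have hFne : ∀ Z ∈ F, Z.Nonempty := by
    intro Z hZ
    rcases Z.eq_empty_or_nonempty with h | h
    · exact absurd (h ▸ hZ) hF.1.2.1
    · exact h
  have hzZ : ∀ (i : ι) (m : ℕ), IsZeroSet {a : ↥P | 1/(m+1:ℝ) ≤ |γ i (a : Y)|} :=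
    fun i m => isZeroSet_ge ((hγ i).comp continuous_subtype_val).abs _
  have hcover : ∀ a : ↥P, ∃ (i : ι) (m : ℕ), 1/(m+1:ℝ) ≤ |γ i (a : Y)| := by
    intro a
    obtain ⟨s, ⟨i, rfl⟩, hi⟩ := a.2
    have hpos : (0:ℝ) < |γ i (a : Y)| := abs_pos.mpr hi
    obtain ⟨m, hm⟩ := exists_nat_one_div_lt hpos
    exact ⟨i, m, le_of_lt hm⟩
  have hpiece : ∃ (i : ι) (m : ℕ), {a : ↥P | 1/(m+1:ℝ) ≤ |γ i (a : Y)|} ∈ F := by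
    by_contra hno
    push_neg at hno
    have hdis : ∀ p : ι × ℕ, ∃ W ∈ F,
        {a : ↥P | 1/(p.2+1:ℝ) ≤ |γ p.1 (a : Y)|} ∩ W = ∅ :=
      fun p => not_mem_zultra_iff_disj hF (hzZ p.1 p.2) (hno p.1 p.2)
    choose Wf hWf hWdisj using hdis
    have hιne : Nonempty ι := by
      obtain ⟨a⟩ := hNE
      obtain ⟨i, -, -⟩ := hcover a
      exact ⟨i⟩
    obtain ⟨e, he⟩ := exists_surjective_nat (ι × ℕ)
    have hmem : (⋂ n, Wf (e n)) ∈ F := zultra_cip_iInter hF hcip (fun n => hWf _)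
    obtain ⟨w, hw⟩ := hFne _ hmem
    obtain ⟨i, m, him⟩ := hcover w
    obtain ⟨n, hn⟩ := he (i, m)
    have hwW : w ∈ Wf (i, m) := by
      have := mem_iInter.mp hw n
      rwa [hn] at this
    have hcontra : w ∈ {a : ↥P | 1/(m+1:ℝ) ≤ |γ i (a : Y)|} ∩ Wf (i, m) := ⟨him, hwW⟩
    rw [hWdisj (i, m)] at hcontra
    exact hcontra
  obtain ⟨i₀, m₀, hM⟩ := hpiece
  set c : ℝ := 1/(m₀+1:ℝ) with hcdef
  have hcpos : 0 < c := by rw [hcdef]; positivity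
  set M : Set ↥P := {a : ↥P | c ≤ |γ i₀ (a : Y)|} with hMdef
  have hMzero : IsZeroSet M := hzZ i₀ m₀
  set A'' : Set Y := {x | c/2 ≤ |γ i₀ x|} with hA''def
  have hA''closed : IsClosed A'' := isClosed_le continuous_const (hγ i₀).abs
  have hA''C : A'' ⊆ {x | γ i₀ x ≠ 0} := by
    intro x hx
    have h1 : c/2 ≤ |γ i₀ x| := hx
    have : 0 < |γ i₀ x| := lt_of_lt_of_le (half_pos hcpos) h1
    exact abs_pos.mp this
  have hA''R : A'' ⊆ R i₀ := hA''C.trans (hCR i₀)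
  have hA''P : A'' ⊆ P := fun x hx => mem_iUnion.mpr ⟨i₀, hA''C hx⟩
  have hrcA'' : IsRealcompact ↥A'' := by
    haveI := cr_subtype (Y := Y) (R i₀)
    have h1 : IsClosed (Subtype.val ⁻¹' A'' : Set ↥(R i₀)) :=
      hA''closed.preimage continuous_subtype_val
    exact IsRealcompact.of_homeomorph (nestedHomeo hA''R)
      (isRealcompact_closed_subset (hR i₀) h1)
  set u : ↥A'' → ↥P := fun a => ⟨(a : Y), hA''P a.2⟩ with hudef
  have hu : Continuous u := continuous_subtype_val.subtype_mk _
  have hMA'' : ∀ b : ↥P, b ∈ M → (b : Y) ∈ A'' := by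
    intro b hb
    show c/2 ≤ |γ i₀ (b : Y)|
    have h1 : c ≤ |γ i₀ (b : Y)| := hb
    linarith
  have hnonemptyG : ∀ Z ∈ F, (u ⁻¹' (Z ∩ M)).Nonempty := by
    intro Z hZ
    obtain ⟨b, hb⟩ := hFne _ (hF.1.2.2.2.1 _ hZ _ hM)
    refine ⟨⟨(b : Y), hMA'' b hb.2⟩, ?_⟩
    show u ⟨(b : Y), hMA'' b hb.2⟩ ∈ Z ∩ M
    have heq : u ⟨(b : Y), hMA'' b hb.2⟩ = b := Subtype.ext rfl
    rw [heq]
    exact hb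
  set G : Set (Set ↥A'') := {W | IsZeroSet W ∧ ∃ Z ∈ F, u ⁻¹' (Z ∩ M) ⊆ W} with hGdef
  have hGzf : IsZFilter G := by
    refine ⟨fun W hW => hW.1, ?_, ⟨isZeroSet_univ, univ, hF.1.2.2.1, subset_univ _⟩, ?_, ?_⟩
    · rintro ⟨-, Z, hZ, hsub⟩
      obtain ⟨a, ha⟩ := hnonemptyG Z hZ
      simpa using hsub ha
    · rintro W₁ ⟨hz1, Z₁, hZ₁, hs1⟩ W₂ ⟨hz2, Z₂, hZ₂, hs2⟩
      refine ⟨hz1.inter hz2, Z₁ ∩ Z₂, hF.1.2.2.2.1 _ hZ₁ _ hZ₂, ?_⟩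
      intro a ha
      exact ⟨hs1 ⟨ha.1.1, ha.2⟩, hs2 ⟨ha.1.2, ha.2⟩⟩
    · rintro W₁ ⟨hz1, Z₁, hZ₁, hs1⟩ W₂ hz2 hsub
      exact ⟨hz2, Z₁, hZ₁, hs1.trans hsub⟩
  have hGcnt : ∀ s : ℕ → Set ↥A'', (∀ n, s n ∈ G) → (⋂ n, s n) ∈ G := by
    intro s hs
    choose hz Zs hZs hsub using hs
    refine ⟨isZeroSet_iInter hz, ⋂ n, Zs n, zultra_cip_iInter hF hcip hZs, ?_⟩
    intro a ha
    refine mem_iInter.mpr (fun n => hsub n ⟨mem_iInter.mp ha.1 n, ha.2⟩)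
  have hGcip : HasCIP G := by
    intro s hs
    choose hz Zs hZs hsub using hs
    obtain ⟨a, ha⟩ := hnonemptyG (⋂ n, Zs n) (zultra_cip_iInter hF hcip hZs)
    exact ⟨a, mem_iInter.mpr (fun n => hsub n ⟨mem_iInter.mp ha.1 n, ha.2⟩)⟩
  have hGprime : ∀ W₁ W₂ : Set ↥A'', IsZeroSet W₁ → IsZeroSet W₂ → W₁ ∪ W₂ ∈ G →
      W₁ ∈ G ∨ W₂ ∈ G := by
    rintro W₁ W₂ hz1 hz2 ⟨-, Z, hZ, hsub⟩
    set γ' : Y → ℝ := fun x => max (|γ i₀ x| - c/2) 0 with hγ'def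
    have hγ'cont : Continuous γ' := ((hγ i₀).abs.sub continuous_const).max continuous_const
    have hA'iff : ∀ x : Y, γ' x ≠ 0 ↔ c/2 < |γ i₀ x| := by
      intro x
      constructor
      · intro hne
        by_contra hle
        push_neg at hle
        exact hne (max_eq_right (by linarith))
      · intro hlt
        have heq : γ' x = |γ i₀ x| - c/2 := max_eq_left (by linarith)
        rw [heq]
        exact ne_of_gt (by linarith)
    set g' : ↥P → ℝ := fun b => γ' (b : Y) with hg'def
    have hg'cont : Continuous g' := hγ'cont.comp continuous_subtype_val
    have hqA'' : ∀ q : ↥{b : ↥P | g' b ≠ 0}, ((q : ↥P) : Y) ∈ A'' :=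
      fun q => le_of_lt ((hA'iff _).mp q.2)
    set v : ↥{b : ↥P | g' b ≠ 0} → ↥A'' := fun q => ⟨((q : ↥P) : Y), hqA'' q⟩ with hvdef
    have hv : Continuous v := (continuous_subtype_val.comp continuous_subtype_val).subtype_mk _
    obtain ⟨V₁, hV₁z, hV₁⟩ := cozero_z_embedded hg'cont (v ⁻¹' W₁) (hz1.preimage hv)
    obtain ⟨V₂, hV₂z, hV₂⟩ := cozero_z_embedded hg'cont (v ⁻¹' W₂) (hz2.preimage hv)
    have hMg' : ∀ b : ↥P, b ∈ M → g' b ≠ 0 := by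
      intro b hb
      exact (hA'iff _).mpr (lt_of_lt_of_le (half_lt_self hcpos) hb)
    have hsub2 : Z ∩ M ⊆ V₁ ∪ V₂ := by
      intro b hb
      have hbA' : g' b ≠ 0 := hMg' b hb.2
      have hbA'' : (b : Y) ∈ A'' := hMA'' b hb.2
      have hpre : (⟨(b : Y), hbA''⟩ : ↥A'') ∈ u ⁻¹' (Z ∩ M) := by
        show u ⟨(b : Y), hbA''⟩ ∈ Z ∩ M
        have heq : u ⟨(b : Y), hbA''⟩ = b := Subtype.ext rfl
        rw [heq]
        exact hb
      have hvq : v ⟨b, hbA'⟩ = ⟨(b : Y), hbA''⟩ := Subtype.ext rfl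
      rcases hsub hpre with h | h
      · left
        have hq : (⟨b, hbA'⟩ : ↥{b : ↥P | g' b ≠ 0}) ∈ v ⁻¹' W₁ := by
          show v ⟨b, hbA'⟩ ∈ W₁
          rw [hvq]
          exact h
        rw [← hV₁] at hq
        exact hq
      · right
        have hq : (⟨b, hbA'⟩ : ↥{b : ↥P | g' b ≠ 0}) ∈ v ⁻¹' W₂ := by
          show v ⟨b, hbA'⟩ ∈ W₂
          rw [hvq]
          exact h
        rw [← hV₂] at hq
        exact hq
    have hVmem : V₁ ∪ V₂ ∈ F :=
      hF.1.2.2.2.2 _ (hF.1.2.2.2.1 _ hZ _ hM) _ (hV₁z.union hV₂z) hsub2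
    have key : ∀ (W' : Set ↥A'') (V' : Set ↥P), IsZeroSet W' → V' ∈ F →
        (Subtype.val ⁻¹' V' : Set ↥{b : ↥P | g' b ≠ 0}) = v ⁻¹' W' → W' ∈ G := by
      intro W' V' hz' hV'F hV'eq
      refine ⟨hz', V', hV'F, ?_⟩
      intro a ha
      have haA' : g' (u a) ≠ 0 := hMg' (u a) ha.2
      have hq : (⟨u a, haA'⟩ : ↥{b : ↥P | g' b ≠ 0}) ∈
          (Subtype.val ⁻¹' V' : Set ↥{b : ↥P | g' b ≠ 0}) := ha.1
      rw [hV'eq] at hq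
      have heq : v ⟨u a, haA'⟩ = a := Subtype.ext rfl
      have hq2 : v ⟨u a, haA'⟩ ∈ W' := hq
      rwa [heq] at hq2
    rcases zultra_prime hF hV₁z hV₂z hVmem with h | h
    · exact Or.inl (key W₁ V₁ hz1 h hV₁)
    · exact Or.inr (key W₂ V₂ hz2 h hV₂)
  have hGultra := zultra_of_prime_cntclosed hGzf hGprime hGcnt
  obtain ⟨y, hy⟩ := hrcA'' G hGultra hGcip
  refine ⟨u y, mem_sInter.mpr (fun Z hZ => ?_)⟩
  have hWz : IsZeroSet (u ⁻¹' (Z ∩ M) : Set ↥A'') :=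
    ((hF.1.1 _ hZ).inter hMzero).preimage hu
  have hmemG : (u ⁻¹' (Z ∩ M)) ∈ G := ⟨hWz, Z, hZ, subset_rfl⟩
  exact (hy _ hmemG).1

end UnionLemma

section DeltaX

variable [TopologicalSpace X] [T35Space X]

set_option linter.unusedSectionVars false

lemma pointUltra_zfilter (x : X) : IsZFilter (pointUltra x) := by
  refine ⟨fun Z hZ => hZ.1, ?_, ⟨isZeroSet_univ, mem_univ x⟩, ?_, ?_⟩
  · rintro ⟨-, hx⟩
    exact hx
  · rintro Z₁ ⟨hz1, hx1⟩ Z₂ ⟨hz2, hx2⟩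
    exact ⟨hz1.inter hz2, hx1, hx2⟩
  · rintro Z₁ ⟨hz1, hx1⟩ Z₂ hz2 hsub
    exact ⟨hz2, hsub hx1⟩

lemma pointUltra_zultra (x : X) : IsZUltrafilter (pointUltra x) := by
  refine ⟨pointUltra_zfilter x, fun G hG hsub => ?_⟩
  apply Subset.antisymm _ hsub
  intro Z' hZ'
  have hz' : IsZeroSet Z' := hG.1 _ hZ'
  refine ⟨hz', ?_⟩
  by_contra hx
  obtain ⟨f, hf, hf0, hf1, -⟩ := cr_sep hz'.isClosed hx
  have hZ'' : {y | f y ≤ 1/2} ∈ pointUltra x :=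
    ⟨isZeroSet_le hf _, by simp only [mem_setOf_eq, hf0]; norm_num⟩
  have hmem : {y | f y ≤ 1/2} ∩ Z' ∈ G := hG.2.2.2.1 _ (hsub hZ'') _ hZ'
  have hempty : {y | f y ≤ 1/2} ∩ Z' = ∅ := by
    ext y
    simp only [mem_inter_iff, mem_setOf_eq, mem_empty_iff_false, iff_false, not_and]
    intro hy1 hy2
    rw [hf1 y hy2] at hy1
    norm_num at hy1
  rw [hempty] at hmem
  exact hG.2.1 hmem

lemma pointUltra_fixed (x : X) : IsFixedFamily (pointUltra x) :=
  ⟨x, fun _ hZ => hZ.2⟩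

def ePt (x : X) : deltaX X :=
  ⟨pointUltra x, pointUltra_zultra x, Or.inl (pointUltra_fixed x)⟩

lemma ePt_mem_deltaCl {Z : Set X} (hZ : IsZeroSet Z) (x : X) :
    ePt x ∈ deltaCl Z ↔ x ∈ Z :=
  ⟨fun h => h.2, fun h => ⟨hZ, h⟩⟩

lemma isOpen_deltaCl_compl {Z : Set X} (hZ : IsZeroSet Z) :
    IsOpen ((deltaCl Z)ᶜ : Set (deltaX X)) :=
  TopologicalSpace.GenerateOpen.basic _ ⟨Z, hZ, rfl⟩

lemma continuous_ePt : Continuous (ePt : X → deltaX X) := by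
  apply continuous_generateFrom_iff.mpr
  rintro U ⟨Z, hZ, rfl⟩
  have : (ePt ⁻¹' (deltaCl Z)ᶜ : Set X) = Zᶜ := by
    ext x
    simp only [mem_preimage, mem_compl_iff]
    rw [ePt_mem_deltaCl hZ]
  rw [this]
  exact hZ.isClosed.isOpen_compl

lemma mem_closure_of_ePt {S : Set X} {x : X}
    (h : ePt x ∈ closure (ePt '' S)) : x ∈ closure S := by
  by_contra hx
  obtain ⟨Z, hZz, hZs, hZx⟩ := exists_zero_superset isClosed_closure hx
  have hopen := isOpen_deltaCl_compl hZz
  have hxO : ePt x ∈ (deltaCl Z)ᶜ := fun hmem => hZx ((ePt_mem_deltaCl hZz x).mp hmem)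
  obtain ⟨p, hpO, hpS⟩ := mem_closure_iff.mp h _ hopen hxO
  obtain ⟨s, hs, rfl⟩ := hpS
  exact hpO ((ePt_mem_deltaCl hZz s).mpr (hZs (subset_closure hs)))

lemma t2_deltaX : T2Space (deltaX X) := by
  constructor
  intro p q hpq
  have hne : p.1 ≠ q.1 := fun h => hpq (Subtype.ext h)
  have hnsub : ¬ (p.1 ⊆ q.1) := by
    intro hsub
    exact hne (p.2.1.2 q.1 q.2.1.1 hsub).symm
  obtain ⟨Z, hZp, hZq⟩ := not_subset.mp hnsub
  have hZz : IsZeroSet Z := p.2.1.1.1 _ hZp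
  obtain ⟨W, hWq, hdisj⟩ := not_mem_zultra_iff_disj q.2.1 hZz hZq
  have hWz : IsZeroSet W := q.2.1.1.1 _ hWq
  obtain ⟨f, hf, hZeq⟩ := hZz
  obtain ⟨g, hg, hWeq⟩ := hWz
  have hden : ∀ y, |f y| + |g y| ≠ 0 := by
    intro y h0
    have h1 := (add_eq_zero_iff_of_nonneg (abs_nonneg _) (abs_nonneg _)).mp h0
    have hyZW : y ∈ Z ∩ W := by
      constructor
      · rw [hZeq]; exact abs_eq_zero.mp h1.1
      · rw [hWeq]; exact abs_eq_zero.mp h1.2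
    rw [hdisj] at hyZW
    exact hyZW
  set φ : X → ℝ := fun y => |f y| / (|f y| + |g y|) with hφdef
  have hφc : Continuous φ := (hf.abs).div ((hf.abs).add (hg.abs)) hden
  have hφZ : ∀ y ∈ Z, φ y = 0 := by
    intro y hy
    have : f y = 0 := by rw [hZeq] at hy; exact hy
    simp [hφdef, this]
  have hφW : ∀ y ∈ W, φ y = 1 := by
    intro y hy
    have hgy : g y = 0 := by rw [hWeq] at hy; exact hy
    have hfy : f y ≠ 0 := by
      intro h0
      have : y ∈ Z ∩ W := ⟨by rw [hZeq]; exact h0, hy⟩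
      rw [hdisj] at this
      exact this
    rw [hφdef]
    simp only [hgy, abs_zero, add_zero]
    exact div_self (abs_ne_zero.mpr hfy)
  set A : Set X := {y | φ y ≤ 1/3} with hAdef
  set B : Set X := {y | 1/3 ≤ φ y} with hBdef
  have hAz : IsZeroSet A := isZeroSet_le hφc _
  have hBz : IsZeroSet B := isZeroSet_ge hφc _
  have hAq : A ∉ q.1 := by
    intro hA
    have hmem : A ∩ W ∈ q.1 := q.2.1.1.2.2.2.1 _ hA _ hWq
    have hempty : A ∩ W = ∅ := by
      ext y
      simp only [hAdef, mem_inter_iff, mem_setOf_eq, mem_empty_iff_false, iff_false, not_and]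
      intro hy1 hy2
      rw [hφW y hy2] at hy1
      norm_num at hy1
    rw [hempty] at hmem
    exact q.2.1.1.2.1 hmem
  have hBp : B ∉ p.1 := by
    intro hB
    have hmem : B ∩ Z ∈ p.1 := p.2.1.1.2.2.2.1 _ hB _ hZp
    have hempty : B ∩ Z = ∅ := by
      ext y
      simp only [hBdef, mem_inter_iff, mem_setOf_eq, mem_empty_iff_false, iff_false, not_and]
      intro hy1 hy2
      rw [hφZ y hy2] at hy1
      norm_num at hy1
    rw [hempty] at hmem
    exact p.2.1.1.2.1 hmem
  refine ⟨(deltaCl B)ᶜ, (deltaCl A)ᶜ, isOpen_deltaCl_compl hBz, isOpen_deltaCl_compl hAz,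
    hBp, hAq, ?_⟩
  rw [Set.disjoint_left]
  intro r hrB hrA
  have huniv : A ∪ B = univ := by
    ext y
    simp only [hAdef, hBdef, mem_union, mem_setOf_eq, mem_univ, iff_true]
    exact le_total (φ y) (1/3)
  have hABr : A ∪ B ∈ r.1 := by rw [huniv]; exact r.2.1.1.2.2.1
  rcases zultra_prime r.2.1 hAz hBz hABr with h | h
  · exact hrA h
  · exact hrB h

lemma isCompact_of_image_ePt {S : Set X} (h : IsCompact (ePt '' S)) : IsCompact S := by
  classical
  rcases S.eq_empty_or_nonempty with rfl | ⟨x₀, hx₀⟩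
  · exact isCompact_empty
  apply isCompact_of_finite_subcover
  intro ι U hUo hcov
  haveI : Nonempty ι := ⟨(mem_iUnion.mp (hcov hx₀)).choose⟩
  have hxdata : ∀ x ∈ S, ∃ (B : Set X) (i : ι), IsZeroSet B ∧ x ∉ B ∧ Bᶜ ⊆ U i := by
    intro x hx
    obtain ⟨i, hi⟩ := mem_iUnion.mp (hcov hx)
    obtain ⟨f, hf, hf0, hf1, -⟩ := cr_sep (hUo i).isClosed_compl (by simpa using hi)
    refine ⟨{y | 1/2 ≤ f y}, i, isZeroSet_ge hf _, ?_, ?_⟩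
    · simp only [mem_setOf_eq, hf0]; norm_num
    · intro y hy
      by_contra hyU
      have : f y = 1 := hf1 y hyU
      simp only [mem_compl_iff, mem_setOf_eq, this] at hy
      norm_num at hy
  choose! B idx hBz hxB hBU using hxdata
  have hcov2 : ePt '' S ⊆ ⋃ x : ↥S, (deltaCl (B x))ᶜ := by
    rintro q ⟨x, hx, rfl⟩
    refine mem_iUnion.mpr ⟨⟨x, hx⟩, ?_⟩
    intro hmem
    exact hxB x hx ((ePt_mem_deltaCl (hBz x hx) x).mp hmem)
  obtain ⟨t, ht⟩ := h.elim_finite_subcover (fun x : ↥S => (deltaCl (B x))ᶜ)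
    (fun x => isOpen_deltaCl_compl (hBz x x.2)) hcov2
  refine ⟨t.image (fun x : ↥S => idx x), ?_⟩
  intro s hs
  obtain ⟨x, hxt, hsx⟩ := mem_iUnion₂.mp (ht (mem_image_of_mem _ hs))
  have hsB : s ∉ B x := fun hmem => hsx ((ePt_mem_deltaCl (hBz x x.2) s).mpr hmem)
  refine mem_iUnion₂.mpr ⟨idx x, Finset.mem_image_of_mem _ hxt, hBU x x.2 hsB⟩

lemma eq_ePt_of_fixed {p : deltaX X} (h : IsFixedFamily p.1) : ∃ x, p = ePt x := by
  obtain ⟨x, hx⟩ := h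
  have hsub : p.1 ⊆ pointUltra x := fun Z hZ => ⟨p.2.1.1.1 _ hZ, hx Z hZ⟩
  exact ⟨x, Subtype.ext (p.2.1.2 (pointUltra x) (pointUltra_zfilter x) hsub).symm⟩

end DeltaX

section PointData

variable [TopologicalSpace X] [T35Space X]

set_option linter.unusedSectionVars false

def goodCoz (X : Type*) [TopologicalSpace X] : Set X :=
  ⋃₀ {C | (∃ g : X → ℝ, Continuous g ∧ C = {x | g x ≠ 0}) ∧
    ∃ R : Set X, C ⊆ R ∧ IsRealcompact ↥R}

lemma isOpen_goodCoz : IsOpen (goodCoz X) := by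
  apply isOpen_sUnion
  rintro C ⟨⟨g, hg, rfl⟩, -⟩
  have : {x | g x ≠ 0} = g ⁻¹' {t | t ≠ 0} := rfl
  rw [this]
  exact isOpen_ne.preimage hg

lemma cozero_lt_one {f : X → ℝ} (hf : Continuous f) :
    ∃ γc : X → ℝ, Continuous γc ∧ {x | f x < 1} = {x | γc x ≠ 0} := by
  refine ⟨fun y => min (f y - 1) 0, (hf.sub continuous_const).min continuous_const, ?_⟩
  ext y
  simp only [mem_setOf_eq]
  constructor
  · intro hlt
    have : min (f y - 1) 0 = f y - 1 := min_eq_left (by linarith)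
    rw [this]
    exact ne_of_lt (by linarith)
  · intro hne
    by_contra hle
    push_neg at hle
    exact hne (min_eq_right (by linarith))

lemma free_point_data {p : deltaX X} (hfree : ¬IsFixedFamily p.1) :
    ∃ (B C : Set X) (g : X → ℝ) (Pp : Set X),
      IsZeroSet B ∧ B ∉ p.1 ∧ (goodCoz X)ᶜ ⊆ B ∧
      (∃ γc : X → ℝ, Continuous γc ∧ C = {x | γc x ≠ 0}) ∧ C ⊆ Pp ∧ IsRealcompact ↥Pp ∧
      Continuous g ∧ (∀ x ∉ B, g x = 0) ∧ (∀ x ∉ C, g x = 1) := by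
  rcases p.2.2 with hfix | ⟨Z, hZp, hZhard⟩
  · exact absurd hfix hfree
  obtain ⟨hZclosed, KZ, hKZcomp, hprop⟩ := hZhard
  have hfree' : ∀ x : X, ∃ Zx ∈ p.1, x ∉ Zx := by
    intro x
    by_contra hcon
    push_neg at hcon
    exact hfree ⟨x, fun Z' hZ' => hcon Z' hZ'⟩
  have hxdata : ∀ x : X, ∃ (A O : Set X),
      IsZeroSet A ∧ IsOpen O ∧ x ∈ O ∧ O ⊆ A ∧ A ∉ p.1 := by
    intro x
    obtain ⟨Zx, hZxp, hxZx⟩ := hfree' x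
    have hZxz : IsZeroSet Zx := p.2.1.1.1 _ hZxp
    obtain ⟨f, hf, hf0, hf1, -⟩ := cr_sep hZxz.isClosed hxZx
    refine ⟨{y | f y ≤ 1/2}, {y | f y < 1/2}, isZeroSet_le hf _,
      isOpen_lt hf continuous_const, by simp only [mem_setOf_eq, hf0]; norm_num,
      fun y hy => show f y ≤ 1/2 from le_of_lt hy, ?_⟩
    intro hA
    have hmem : {y | f y ≤ 1/2} ∩ Zx ∈ p.1 := p.2.1.1.2.2.2.1 _ hA _ hZxp
    have hempty : {y | f y ≤ 1/2} ∩ Zx = ∅ := by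
      ext y
      simp only [mem_inter_iff, mem_setOf_eq, mem_empty_iff_false, iff_false, not_and]
      intro hy1 hy2
      rw [hf1 y hy2] at hy1
      norm_num at hy1
    rw [hempty] at hmem
    exact p.2.1.1.2.1 hmem
  choose A O hAz hOopen hxO hOA hAp using hxdata
  obtain ⟨t, ht⟩ := hKZcomp.elim_finite_subcover O hOopen
    (fun x _ => mem_iUnion.mpr ⟨x, hxO x⟩)
  set V : Set X := ⋃ x ∈ t, O x with hVdef
  have hVopen : IsOpen V := isOpen_biUnion (fun x _ => hOopen x)
  obtain ⟨Pp, hPrc, f₁, hf₁c, hf₁0, hf₁1⟩ := hprop V hVopen ht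
  have hCPp : {x | f₁ x < 1} ⊆ Pp := by
    intro y hy
    by_contra hyP
    have : f₁ y = 1 := hf₁1 y hyP
    simp only [mem_setOf_eq, this] at hy
    norm_num at hy
  have hCgood : {x | f₁ x < 1} ⊆ goodCoz X := by
    intro y hy
    exact mem_sUnion.mpr ⟨{x | f₁ x < 1}, ⟨cozero_lt_one hf₁c, Pp, hCPp, hPrc⟩, hy⟩
  refine ⟨{x | 1/4 ≤ f₁ x}, {x | f₁ x < 1},
    fun x => min (max (4*(f₁ x - 1/4)) 0) 1, Pp, isZeroSet_ge hf₁c _, ?_, ?_,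
    cozero_lt_one hf₁c, hCPp, hPrc, ?_, ?_, ?_⟩
  · -- B ∉ p.1
    intro hB
    have hBZ : {x | 1/4 ≤ f₁ x} ∩ Z ∈ p.1 := p.2.1.1.2.2.2.1 _ hB _ hZp
    have hsubA : {x | 1/4 ≤ f₁ x} ∩ Z ⊆ ⋃ x ∈ t, A x := by
      intro y hy
      have hyV : y ∈ V := by
        by_contra hyV
        have h0 : f₁ y = 0 := hf₁0 y ⟨hy.2, hyV⟩
        have h14 : (1/4:ℝ) ≤ f₁ y := hy.1
        rw [h0] at h14
        norm_num at h14
      obtain ⟨x, hxt, hyO⟩ := mem_iUnion₂.mp hyV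
      exact mem_iUnion₂.mpr ⟨x, hxt, hOA x hyO⟩
    have hmem : (⋃ x ∈ t, A x) ∈ p.1 :=
      p.2.1.1.2.2.2.2 _ hBZ _ (isZeroSet_biUnion_finset t A (fun x _ => hAz x)) hsubA
    obtain ⟨x, -, hxA⟩ := zultra_prime_finset p.2.1 t A (fun x _ => hAz x) hmem
    exact hAp x hxA
  · -- (goodCoz X)ᶜ ⊆ B
    intro x hx
    by_contra hxB
    apply hx
    apply hCgood
    simp only [mem_setOf_eq] at hxB ⊢
    push_neg at hxB
    linarith
  · -- Continuous g
    exact ((continuous_const.mul (hf₁c.sub continuous_const)).max continuous_const).min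
      continuous_const
  · -- ∀ x ∉ B, g x = 0
    intro x hx
    simp only [mem_setOf_eq] at hx
    push_neg at hx
    have h1 : max (4*(f₁ x - 1/4)) 0 = 0 := max_eq_right (by linarith)
    show min (max (4*(f₁ x - 1/4)) 0) 1 = 0
    rw [h1]
    exact min_eq_left zero_le_one
  · -- ∀ x ∉ C, g x = 1
    intro x hx
    simp only [mem_setOf_eq] at hx
    push_neg at hx
    apply min_eq_right
    calc (1:ℝ) ≤ 4*(f₁ x - 1/4) := by linarith
      _ ≤ max (4*(f₁ x - 1/4)) 0 := le_max_left _ _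

lemma goodCoz_point_data {x : X} (hx : x ∈ goodCoz X) :
    ∃ (B : Set X) (g : X → ℝ) (C R : Set X),
      IsZeroSet B ∧ x ∉ B ∧ (∃ γc : X → ℝ, Continuous γc ∧ C = {x | γc x ≠ 0}) ∧ C ⊆ R ∧
      IsRealcompact ↥R ∧ Continuous g ∧ (∀ y ∉ B, g y = 0) ∧ (∀ y ∉ C, g y = 1) := by
  obtain ⟨C, ⟨⟨γc, hγc, rfl⟩, R, hCR, hRrc⟩, hxC⟩ := hx
  have hxC' : γc x ≠ 0 := hxC
  set s : ℝ := |γc x| with hsdef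
  have hspos : 0 < s := abs_pos.mpr hxC'
  refine ⟨{y | |γc y| ≤ s/2}, fun y => min (max (1 - (2/s)*|γc y|) 0) 1,
    {x | γc x ≠ 0}, R, isZeroSet_le hγc.abs _, ?_, ⟨γc, hγc, rfl⟩, hCR, hRrc, ?_, ?_, ?_⟩
  · simp only [mem_setOf_eq]
    push_neg
    linarith
  · exact ((continuous_const.sub (continuous_const.mul hγc.abs)).max continuous_const).min
      continuous_const
  · intro y hy
    simp only [mem_setOf_eq] at hy
    push_neg at hy
    have h2 : (2/s) * (s/2) ≤ (2/s) * |γc y| :=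
      mul_le_mul_of_nonneg_left (le_of_lt hy) (by positivity)
    have h3 : (2/s) * (s/2) = 1 := by field_simp
    have h1 : max (1 - (2/s)*|γc y|) 0 = 0 := max_eq_right (by rw [h3] at h2; linarith)
    show min (max (1 - (2/s)*|γc y|) 0) 1 = 0
    rw [h1]
    exact min_eq_left zero_le_one
  · intro y hy
    simp only [mem_setOf_eq] at hy
    push_neg at hy
    show min (max (1 - (2/s)*|γc y|) 0) 1 = 1
    rw [hy]
    norm_num

end PointData

section Main

variable [TopologicalSpace X] [T35Space X]

set_option linter.unusedSectionVars false

lemma hard_of_compact_delta {K : Set (deltaX X)} (hK : IsCompact K) :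
    IsHard {x : X | ePt x ∈ K} := by
  classical
  haveI := t2_deltaX (X := X)
  have hKclosed : IsClosed K := hK.isClosed
  set H : Set X := {x | ePt x ∈ K} with hHdef
  have hHclosed : IsClosed H := hKclosed.preimage continuous_ePt
  set K₀ : Set X := H \ goodCoz X with hK₀def
  have hK₀closed : IsClosed K₀ := hHclosed.sdiff isOpen_goodCoz
  have himg : ePt '' K₀ = K ∩ closure (ePt '' K₀) := by
    apply Subset.antisymm
    · rintro q ⟨x, hx, rfl⟩
      exact ⟨hx.1, subset_closure ⟨x, hx, rfl⟩⟩
    · rintro p ⟨hpK, hpcl⟩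
      by_cases hfix : IsFixedFamily p.1
      · obtain ⟨x, rfl⟩ := eq_ePt_of_fixed hfix
        have hxcl : x ∈ closure K₀ := mem_closure_of_ePt hpcl
        rw [hK₀closed.closure_eq] at hxcl
        exact ⟨x, hxcl, rfl⟩
      · exfalso
        obtain ⟨B, C, g, Pp, hBz, hBp, hNB, -, -, -, -, -, -⟩ := free_point_data hfix
        have hopen := isOpen_deltaCl_compl hBz
        have hpB : p ∈ (deltaCl B)ᶜ := hBp
        obtain ⟨q, hqO, hqim⟩ := mem_closure_iff.mp hpcl _ hopen hpB
        obtain ⟨x, hxK₀, rfl⟩ := hqim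
        apply hqO
        exact ⟨hBz, hNB hxK₀.2⟩
  have hK₀comp : IsCompact K₀ := by
    apply isCompact_of_image_ePt
    rw [himg]
    exact hK.inter_right isClosed_closure
  refine ⟨hHclosed, K₀, hK₀comp, ?_⟩
  intro V hVopen hKV
  set D : Set X := H \ V with hDdef
  have hDclosed : IsClosed D := hHclosed.sdiff hVopen
  set K' : Set (deltaX X) := K ∩ closure (ePt '' D) with hK'def
  have hK'comp : IsCompact K' := hK.inter_right isClosed_closure
  have hpdata : ∀ p : deltaX X, p ∈ K' →
      ∃ (O : Set (deltaX X)) (g : X → ℝ) (C R : Set X),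
      IsOpen O ∧ p ∈ O ∧ (∃ γc : X → ℝ, Continuous γc ∧ C = {x | γc x ≠ 0}) ∧ C ⊆ R ∧
      IsRealcompact ↥R ∧ Continuous g ∧ (∀ y, ePt y ∈ O → g y = 0) ∧
      (∀ y ∉ C, g y = 1) := by
    intro p hp
    by_cases hfix : IsFixedFamily p.1
    · obtain ⟨x, rfl⟩ := eq_ePt_of_fixed hfix
      have hxD : x ∈ D := by
        have := mem_closure_of_ePt hp.2
        rwa [hDclosed.closure_eq] at this
      have hxN : x ∈ goodCoz X := by
        by_contra hxN
        exact hxD.2 (hKV ⟨hxD.1, hxN⟩)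
      obtain ⟨B, g, C, R, hBz, hxB, hCcoz, hCR, hRrc, hgc, hg0, hg1⟩ :=
        goodCoz_point_data hxN
      refine ⟨(deltaCl B)ᶜ, g, C, R, isOpen_deltaCl_compl hBz, ?_, hCcoz, hCR, hRrc,
        hgc, ?_, hg1⟩
      · exact fun h => hxB h.2
      · intro y hy
        exact hg0 y (fun hyB => hy ⟨hBz, hyB⟩)
    · obtain ⟨B, C, g, Pp, hBz, hBp, hNB, hCcoz, hCPp, hPrc, hgc, hg0, hg1⟩ :=
        free_point_data hfix
      refine ⟨(deltaCl B)ᶜ, g, C, Pp, isOpen_deltaCl_compl hBz, hBp, hCcoz, hCPp, hPrc,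
        hgc, ?_, hg1⟩
      intro y hy
      exact hg0 y (fun hyB => hy ⟨hBz, hyB⟩)
  choose! Od gf Cs Rs hOopen hpO hCcoz hCR hRrc hgc hg0 hg1 using hpdata
  choose! γc hγcont hCeq using hCcoz
  obtain ⟨t, ht⟩ := hK'comp.elim_finite_subcover (fun q : ↥K' => Od q.1)
    (fun q => hOopen q.1 q.2) (fun p hp => mem_iUnion.mpr ⟨⟨p, hp⟩, hpO p hp⟩)
  set P : Set X := ⋃ q : ↥t, {x | γc (q : ↥K').1 x ≠ 0} with hPdef
  have hPrc : IsRealcompact ↥P := by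
    apply isRealcompact_finite_union_cozero (fun q : ↥t => γc (q : ↥K').1)
      (fun q => hγcont (q : ↥K').1 (q : ↥K').2) (fun q : ↥t => Rs (q : ↥K').1)
    · intro q
      rw [← hCeq (q : ↥K').1 (q : ↥K').2]
      exact hCR (q : ↥K').1 (q : ↥K').2
    · exact fun q => hRrc (q : ↥K').1 (q : ↥K').2
  refine ⟨P, hPrc, fun x => ∏ q ∈ t, gf q.1 x, ?_, ?_, ?_⟩
  · exact continuous_finset_prod t (fun q _ => hgc q.1 q.2)
  · intro x hx
    have hxK' : ePt x ∈ K' := ⟨hx.1, subset_closure ⟨x, hx, rfl⟩⟩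
    obtain ⟨q, hqt, hqO⟩ := mem_iUnion₂.mp (ht hxK')
    exact Finset.prod_eq_zero hqt (hg0 q.1 q.2 x hqO)
  · intro x hx
    apply Finset.prod_eq_one
    intro q hqt
    apply hg1 q.1 q.2
    rw [hCeq q.1 q.2]
    intro hne
    exact hx (mem_iUnion.mpr ⟨⟨q, hqt⟩, hne⟩)

end Main


/-- if K is compact in δX then K ∩ X is hard in X; if H is closed in X
with cl_{δX} H compact then H is hard in X. -/
theorem stmt15 [TopologicalSpace X] [T35Space X] :
    (∀ K : Set (deltaX X), IsCompact K →
      IsHard {x : X | ∃ p ∈ K, p.1 = pointUltra x}) ∧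
    (∀ H : Set X, IsClosed H →
      IsCompact (closure {p : deltaX X | ∃ x ∈ H, p.1 = pointUltra x}) →
      IsHard H) := by
  have hset : ∀ K : Set (deltaX X),
      {x : X | ∃ p ∈ K, p.1 = pointUltra x} = {x : X | ePt x ∈ K} := by
    intro K
    ext x
    simp only [mem_setOf_eq]
    constructor
    · rintro ⟨p, hp, hpx⟩
      have : p = ePt x := Subtype.ext hpx
      rwa [← this]
    · intro h
      exact ⟨ePt x, h, rfl⟩
  constructor
  · intro K hK
    rw [hset K]
    exact hard_of_compact_delta hK
  · intro H hHcl hcomp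
    have hsetH : {p : deltaX X | ∃ x ∈ H, p.1 = pointUltra x} = ePt '' H := by
      ext p
      simp only [mem_setOf_eq, mem_image]
      constructor
      · rintro ⟨x, hx, hpx⟩
        exact ⟨x, hx, (Subtype.ext hpx).symm⟩
      · rintro ⟨x, hx, rfl⟩
        exact ⟨x, hx, rfl⟩
    rw [hsetH] at hcomp
    have h1 := hard_of_compact_delta hcomp
    have h2 : {x : X | ePt x ∈ closure (ePt '' H)} = H := by
      apply Subset.antisymm
      · intro x hx
        have := mem_closure_of_ePt hx
        rwa [hHcl.closure_eq] at this
      · intro x hx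
        exact subset_closure ⟨x, hx, rfl⟩
    rwa [h2] at h1
end

section
/- For f ∈ C(X) on a Tychonoff space X, the cozero set X \ Z(f) is realcompact if and only if Z(f) belongs to every free real z-ultrafilter on X. -/
open Set Topology

variable {X : Type*}

section ZS
variable {Y : Type*} [TopologicalSpace Y]

lemma zs_univ : IsZeroSet (univ : Set Y) :=
  ⟨fun _ => 0, continuous_const, by ext x; simp⟩

lemma zs_inter {A B : Set Y} (hA : IsZeroSet A) (hB : IsZeroSet B) : IsZeroSet (A ∩ B) := by
  obtain ⟨a, ha, rfl⟩ := hA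
  obtain ⟨b, hb, rfl⟩ := hB
  refine ⟨fun x => |a x| + |b x|, by fun_prop, ?_⟩
  ext x
  simp only [mem_inter_iff, mem_setOf_eq]
  constructor
  · rintro ⟨h1, h2⟩
    simp [h1, h2]
  · intro h
    have h1 : |a x| = 0 := by nlinarith [abs_nonneg (a x), abs_nonneg (b x)]
    have h2 : |b x| = 0 := by nlinarith [abs_nonneg (a x), abs_nonneg (b x)]
    simp only [abs_eq_zero] at h1 h2
    exact ⟨h1, h2⟩

lemma zs_union {A B : Set Y} (hA : IsZeroSet A) (hB : IsZeroSet B) : IsZeroSet (A ∪ B) := by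
  obtain ⟨a, ha, rfl⟩ := hA
  obtain ⟨b, hb, rfl⟩ := hB
  exact ⟨fun x => a x * b x, by fun_prop, by ext x; simp [mul_eq_zero]⟩

lemma zs_preimage {W : Type*} [TopologicalSpace W] {g : W → Y} (hg : Continuous g)
    {A : Set Y} (hA : IsZeroSet A) : IsZeroSet (g ⁻¹' A) := by
  obtain ⟨a, ha, rfl⟩ := hA
  exact ⟨a ∘ g, ha.comp hg, rfl⟩

lemma zs_le {g : Y → ℝ} (hg : Continuous g) (a : ℝ) : IsZeroSet {x | g x ≤ a} := by
  refine ⟨fun x => max (g x - a) 0, by fun_prop, ?_⟩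
  ext x
  simp [max_eq_right_iff, sub_nonpos]

lemma zs_ge {g : Y → ℝ} (hg : Continuous g) (a : ℝ) : IsZeroSet {x | a ≤ g x} := by
  refine ⟨fun x => max (a - g x) 0, by fun_prop, ?_⟩
  ext x
  simp [max_eq_right_iff, sub_nonpos]

end ZS
section ZFilters
variable {Y : Type*} [TopologicalSpace Y]

lemma zf_mem_nonempty {F : Set (Set Y)} (hF : IsZFilter F) {Z : Set Y} (hZ : Z ∈ F) :
    Z.Nonempty := by
  rw [nonempty_iff_ne_empty]
  rintro rfl
  exact hF.2.1 hZ

lemma ultra_mem_of_meets {U : Set (Set Y)} (hU : IsZUltrafilter U) {Z : Set Y}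
    (hZ : IsZeroSet Z) (h : ∀ Z' ∈ U, (Z ∩ Z').Nonempty) : Z ∈ U := by
  set G : Set (Set Y) := {W | IsZeroSet W ∧ ∃ Z' ∈ U, Z ∩ Z' ⊆ W} with hGdef
  have hG : IsZFilter G := by
    refine ⟨fun W hW => hW.1, ?_, ⟨zs_univ, univ, hU.1.2.2.1, subset_univ _⟩, ?_, ?_⟩
    · rintro ⟨-, Z', hZ', hsub⟩
      exact (h Z' hZ').ne_empty (subset_empty_iff.mp hsub)
    · rintro W₁ ⟨hz1, Z₁, hZ₁, hs1⟩ W₂ ⟨hz2, Z₂, hZ₂, hs2⟩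
      refine ⟨zs_inter hz1 hz2, Z₁ ∩ Z₂, hU.1.2.2.2.1 Z₁ hZ₁ Z₂ hZ₂, ?_⟩
      intro x hx
      exact ⟨hs1 ⟨hx.1, hx.2.1⟩, hs2 ⟨hx.1, hx.2.2⟩⟩
    · rintro W₁ ⟨hz1, Z₁, hZ₁, hs1⟩ W₂ hz2 hsub
      exact ⟨hz2, Z₁, hZ₁, hs1.trans hsub⟩
  have hUG : U ⊆ G := fun Z' hZ' => ⟨hU.1.1 Z' hZ', Z', hZ', inter_subset_right⟩
  have := hU.2 G hG hUG
  rw [← this]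
  exact ⟨hZ, univ, hU.1.2.2.1, by simp⟩

lemma ultra_exists_disjoint {U : Set (Set Y)} (hU : IsZUltrafilter U) {Z : Set Y}
    (hZ : IsZeroSet Z) (h : Z ∉ U) : ∃ Z' ∈ U, Z ∩ Z' = ∅ := by
  by_contra hc
  push_neg at hc
  exact h (ultra_mem_of_meets hU hZ hc)

lemma ultra_prime {U : Set (Set Y)} (hU : IsZUltrafilter U) : IsPrimeZFilter U := by
  refine ⟨hU.1, fun Z₁ Z₂ h1 h2 hmem => ?_⟩
  by_cases hZ₁ : Z₁ ∈ U
  · exact Or.inl hZ₁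
  · obtain ⟨Z', hZ', hdisj⟩ := ultra_exists_disjoint hU h1 hZ₁
    refine Or.inr (hU.1.2.2.2.2 ((Z₁ ∪ Z₂) ∩ Z') (hU.1.2.2.2.1 _ hmem _ hZ') Z₂ h2 ?_)
    rintro x ⟨hx1 | hx2, hx'⟩
    · exact absurd (show x ∈ Z₁ ∩ Z' from ⟨hx1, hx'⟩) (by rw [hdisj]; exact notMem_empty x)
    · exact hx2

lemma exists_zultra_superset {F : Set (Set Y)} (hF : IsZFilter F) :
    ∃ U, IsZUltrafilter U ∧ F ⊆ U := by
  have hub : ∀ c ⊆ {G : Set (Set Y) | IsZFilter G ∧ F ⊆ G}, IsChain (· ⊆ ·) c → c.Nonempty →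
      ∃ ub ∈ {G : Set (Set Y) | IsZFilter G ∧ F ⊆ G}, ∀ s ∈ c, s ⊆ ub := by
    intro c hcS hchain hcne
    obtain ⟨G₀, hG₀⟩ := hcne
    refine ⟨⋃₀ c, ⟨⟨?_, ?_, ?_, ?_, ?_⟩,
      ((hcS hG₀).2 : F ⊆ G₀).trans (subset_sUnion_of_mem hG₀)⟩,
      fun s hs => subset_sUnion_of_mem hs⟩
    · rintro Z ⟨G, hG, hZG⟩
      exact (hcS hG).1.1 Z hZG
    · rintro ⟨G, hG, hZG⟩
      exact (hcS hG).1.2.1 hZG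
    · exact ⟨G₀, hG₀, (hcS hG₀).1.2.2.1⟩
    · rintro Z₁ ⟨G₁, hG₁, hZ₁⟩ Z₂ ⟨G₂, hG₂, hZ₂⟩
      rcases hchain.total hG₁ hG₂ with h | h
      · exact ⟨G₂, hG₂, (hcS hG₂).1.2.2.2.1 Z₁ (h hZ₁) Z₂ hZ₂⟩
      · exact ⟨G₁, hG₁, (hcS hG₁).1.2.2.2.1 Z₁ hZ₁ Z₂ (h hZ₂)⟩
    · rintro Z₁ ⟨G₁, hG₁, hZ₁⟩ Z₂ hz2 hsub
      exact ⟨G₁, hG₁, (hcS hG₁).1.2.2.2.2 Z₁ hZ₁ Z₂ hz2 hsub⟩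
  obtain ⟨M, hFM, hM⟩ := zorn_subset_nonempty _ hub F ⟨hF, subset_rfl⟩
  refine ⟨M, ⟨hM.1.1, fun G hG hMG => ?_⟩, hM.1.2⟩
  exact subset_antisymm (hM.2 ⟨hG, hM.1.2.trans hMG⟩ hMG) hMG

end ZFilters
section PrimeCIP
variable {Y : Type*} [TopologicalSpace Y]

set_option maxHeartbeats 2000000 in
lemma primeCIP {F V : Set (Set Y)} (hF : IsPrimeZFilter F) (hcip : HasCIP F)
    (hV : IsZFilter V) (hFV : F ⊆ V) : HasCIP V := by
  intro s hs
  choose f hfc hfz using fun n => hV.1 (s n) (hs n)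
  set c : ℕ → ℝ := fun n => (1 / 2 : ℝ) ^ (n + 1) with hcdef
  have hcpos : ∀ n, 0 < c n := fun n => by positivity
  have hcsum : Summable c := by
    have : Summable (fun n : ℕ => (1 / 2 : ℝ) ^ n) :=
      summable_geometric_of_lt_one (by norm_num) (by norm_num)
    simpa [hcdef, pow_succ, mul_comm] using this.mul_right (1 / 2 : ℝ)
  set m : ℕ → Y → ℝ := fun n x => min |f n x| 1 with hmdef
  have hm0 : ∀ n x, 0 ≤ m n x := fun n x => le_min (abs_nonneg _) zero_le_one
  have hm1 : ∀ n x, m n x ≤ 1 := fun n x => min_le_right _ _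
  have hterm0 : ∀ n x, 0 ≤ c n * m n x := fun n x => mul_nonneg (hcpos n).le (hm0 n x)
  have hterm1 : ∀ n x, c n * m n x ≤ c n := fun n x =>
    mul_le_of_le_one_right (hcpos n).le (hm1 n x)
  have hsummx : ∀ x, Summable (fun n => c n * m n x) := fun x =>
    Summable.of_nonneg_of_le (fun n => hterm0 n x) (fun n => hterm1 n x) hcsum
  set g : Y → ℝ := fun x => ∑' n, c n * m n x with hgdef
  have hgc : Continuous g := by
    apply continuous_tsum (u := c)
    · exact fun n => continuous_const.mul (((hfc n).abs).min continuous_const)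
    · exact hcsum
    · intro n x
      rw [Real.norm_eq_abs, abs_of_nonneg (hterm0 n x)]
      exact hterm1 n x
  have hg0 : ∀ x, 0 ≤ g x := fun x => tsum_nonneg (fun n => hterm0 n x)
  -- if g x = 0 then x ∈ all s n
  have hgz : ∀ x, g x = 0 → ∀ n, x ∈ s n := by
    intro x hgx n
    have h1 : c n * m n x ≤ 0 := by
      rw [← hgx]
      exact Summable.le_tsum (hsummx x) n (fun j _ => hterm0 j x)
    have h2 : m n x = 0 := by
      have := (hterm0 n x).antisymm h1
      rcases mul_eq_zero.mp this.symm with h | h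
      · exact absurd h (hcpos n).ne'
      · exact h
    have h3 : f n x = 0 := by
      rcases min_choice |f n x| (1:ℝ) with h | h
      · rw [hmdef] at h2; simp only at h2
        rw [h2] at h; exact abs_eq_zero.mp h.symm
      · rw [hmdef] at h2; simp only at h2
        rw [h2] at h; norm_num at h
    rw [hfz n]; exact h3
  -- the finite intersections
  set J : ℕ → Set Y := fun n => Nat.rec (s 0) (fun k Jk => Jk ∩ s (k + 1)) n with hJdef
  have hJV : ∀ n, J n ∈ V := by
    intro n
    induction n with
    | zero => exact hs 0
    | succ k ih => exact hV.2.2.2.1 _ ih _ (hs (k + 1))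
  have hJsub : ∀ n k, k ≤ n → J n ⊆ s k := by
    intro n
    induction n with
    | zero => intro k hk; interval_cases k; exact subset_rfl
    | succ p ih =>
      intro k hk
      rcases Nat.lt_or_ge k (p + 1) with h | h
      · exact (inter_subset_left).trans (ih k (Nat.lt_succ_iff.mp h))
      · have : k = p + 1 := le_antisymm hk h
        rw [this]; exact inter_subset_right
  -- the bound
  have hbound : ∀ n x, x ∈ J n → g x ≤ c n := by
    intro n x hx
    have hz : ∀ k ≤ n, m k x = 0 := by
      intro k hk
      have : f k x = 0 := by
        have := hJsub n k hk hx
        rw [hfz k] at this; exact this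
      simp [hmdef, this]
    have tail_eq : g x = ∑' k, c (k + (n + 1)) * m (k + (n + 1)) x := by
      show (∑' k, c k * m k x) = _
      rw [← Summable.sum_add_tsum_nat_add (n + 1) (hsummx x)]
      rw [Finset.sum_eq_zero, zero_add]
      intro k hk
      rw [hz k (Nat.lt_succ_iff.mp (Finset.mem_range.mp hk)), mul_zero]
    have tail_le : (∑' k, c (k + (n + 1)) * m (k + (n + 1)) x) ≤ ∑' k : ℕ, c (k + (n + 1)) := by
      apply Summable.tsum_le_tsum
      · exact fun k => hterm1 _ x
      · exact (summable_nat_add_iff (n + 1)).mpr (hsummx x)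
      · exact (summable_nat_add_iff (n + 1)).mpr hcsum
    have tail_val : (∑' k : ℕ, c (k + (n + 1))) = c n := by
      have h1 : ∀ k : ℕ, c (k + (n + 1)) = c n * (1 / 2 : ℝ) ^ (k + 1) := by
        intro k
        rw [hcdef]
        simp only
        ring
      rw [tsum_congr h1, tsum_mul_left]
      have h2 : (∑' k : ℕ, (1 / 2 : ℝ) ^ (k + 1)) = 1 := by
        have h3 : Summable (fun k : ℕ => (1 / 2 : ℝ) ^ k) :=
          summable_geometric_of_lt_one (by norm_num) (by norm_num)
        have h4 : (∑' k : ℕ, (1 / 2 : ℝ) ^ k) = 2 := by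
          rw [tsum_geometric_of_lt_one (by norm_num) (by norm_num)]; norm_num
        calc (∑' k : ℕ, (1 / 2 : ℝ) ^ (k + 1))
            = ∑' k : ℕ, (1 / 2 : ℝ) * (1 / 2 : ℝ) ^ k := by
              apply tsum_congr; intro k; rw [pow_succ]; ring
          _ = (1 / 2 : ℝ) * ∑' k : ℕ, (1 / 2 : ℝ) ^ k := tsum_mul_left
          _ = 1 := by rw [h4]; norm_num
      rw [h2, mul_one]
    rw [tail_eq]
    exact tail_le.trans (le_of_eq tail_val)
  -- the sets C n and D n
  set C : ℕ → Set Y := fun n => {x | g x ≤ c n} with hCdef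
  set D : ℕ → Set Y := fun n => {x | c n ≤ g x} with hDdef
  have hCz : ∀ n, IsZeroSet (C n) := fun n => zs_le hgc (c n)
  have hDz : ∀ n, IsZeroSet (D n) := fun n => zs_ge hgc (c n)
  have hCV : ∀ n, C n ∈ V := fun n =>
    hV.2.2.2.2 (J n) (hJV n) (C n) (hCz n) (fun x hx => hbound n x hx)
  have hCF : ∀ n, C n ∈ F := by
    intro n
    have hun : C n ∪ D n ∈ F := by
      have : C n ∪ D n = univ := by
        ext x; simp only [hCdef, hDdef, mem_union, mem_setOf_eq, mem_univ, iff_true]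
        exact le_total (g x) (c n)
      rw [this]; exact hF.1.2.2.1
    rcases hF.2 (C n) (D n) (hCz n) (hDz n) hun with h | h
    · exact h
    · exfalso
      have h1 : D n ∩ C (n + 1) ∈ V := hV.2.2.2.1 _ (hFV h) _ (hCV (n + 1))
      have hlt : c (n + 1) < c n :=
        pow_lt_pow_right_of_lt_one₀ (by norm_num) (by norm_num) (by omega)
      have h2 : D n ∩ C (n + 1) = ∅ := by
        ext x
        simp only [hCdef, hDdef, mem_inter_iff, mem_setOf_eq, mem_empty_iff_false, iff_false,
          not_and, not_le]
        intro hx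
        exact lt_of_lt_of_le hlt hx
      rw [h2] at h1
      exact hV.2.1 h1
  obtain ⟨x, hx⟩ := hcip C hCF
  have hgx : g x = 0 := by
    have hle : ∀ n, g x ≤ c n := fun n => by
      have := mem_iInter.mp hx n
      exact this
    by_contra hne
    have hpos : 0 < g x := lt_of_le_of_ne (hg0 x) (Ne.symm hne)
    obtain ⟨n, hn⟩ := exists_pow_lt_of_lt_one hpos (show (1/2 : ℝ) < 1 by norm_num)
    have : c n < g x := by
      calc c n = (1/2 : ℝ) ^ (n + 1) := rfl
        _ ≤ (1/2 : ℝ) ^ n := by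
          apply pow_le_pow_of_le_one (by norm_num) (by norm_num) (by omega)
        _ < g x := hn
    exact absurd (hle n) (not_le.mpr this)
  exact ⟨x, mem_iInter.mpr (hgz x hgx)⟩

end PrimeCIP
section Bridge
variable {Y : Type*} [TopologicalSpace Y]

lemma bridge {f : Y → ℝ} (hf : Continuous f) {W : Set ↥({x : Y | f x = 0}ᶜ)}
    (hW : IsZeroSet W) :
    IsZeroSet (Subtype.val '' W ∪ {x : Y | f x = 0}) := by
  obtain ⟨g, hg, rfl⟩ := hW
  set G : Y → ℝ := fun x =>
    if h : f x = 0 then 0 else |f x| * min |g ⟨x, h⟩| 1 with hGdef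
  have hG0 : ∀ x, 0 ≤ G x := by
    intro x
    rw [hGdef]
    by_cases h : f x = 0
    · simp [h]
    · simp only [dif_neg h]
      exact mul_nonneg (abs_nonneg _) (le_min (abs_nonneg _) zero_le_one)
  have hGle : ∀ x, G x ≤ |f x| := by
    intro x
    rw [hGdef]
    by_cases h : f x = 0
    · simp [h]
    · simp only [dif_neg h]
      exact mul_le_of_le_one_right (abs_nonneg _) (min_le_right _ _)
  have hSopen : IsOpen ({x : Y | f x = 0}ᶜ) :=
    (isClosed_eq hf continuous_const).isOpen_compl
  have hGc : Continuous G := by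
    rw [continuous_iff_continuousAt]
    intro x
    by_cases hx : f x = 0
    · have hGx : G x = 0 := by rw [hGdef]; simp [hx]
      unfold ContinuousAt
      rw [hGx]
      apply squeeze_zero hG0 hGle
      have h2 : Filter.Tendsto (fun t => |f t|) (𝓝 x) (𝓝 |f x|) := (hf.abs).continuousAt
      simpa [hx] using h2
    · apply ContinuousOn.continuousAt ?_ (hSopen.mem_nhds hx)
      rw [continuousOn_iff_continuous_restrict]
      have hrestrict : ({x : Y | f x = 0}ᶜ).restrict G =
          fun y : ↥({x : Y | f x = 0}ᶜ) => |f y.1| * min |g y| 1 := by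
        funext y
        simp only [restrict_apply, hGdef]
        exact dif_neg y.2
      show Continuous (({x : Y | f x = 0}ᶜ).restrict G)
      rw [hrestrict]
      exact ((hf.comp continuous_subtype_val).abs).mul
        ((hg.abs).min continuous_const)
  refine ⟨G, hGc, ?_⟩
  ext x
  simp only [mem_union, mem_image, mem_setOf_eq]
  by_cases hx : f x = 0
  · constructor
    · intro _; rw [hGdef]; simp [hx]
    · intro _; exact Or.inr hx
  · rw [hGdef]
    simp only [dif_neg hx]
    constructor
    · rintro (⟨y, hy, hyx⟩ | h)
      · have : y = ⟨x, hx⟩ := Subtype.ext hyx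
        rw [this] at hy
        have hg0 : g ⟨x, hx⟩ = 0 := hy
        simp [hg0]
      · exact absurd h hx
    · intro h
      rcases mul_eq_zero.mp h with h1 | h1
      · exact absurd (abs_eq_zero.mp h1) hx
      · left
        refine ⟨⟨x, hx⟩, ?_, rfl⟩
        rcases min_choice |g ⟨x, hx⟩| (1 : ℝ) with hm | hm
        · rw [hm] at h1
          show g ⟨x, hx⟩ = 0
          exact abs_eq_zero.mp h1
        · rw [hm] at h1; norm_num at h1
  
end Bridge
/-- the cozero set X \ Z(f) is realcompact iff Z(f) belongs to every
free real z-ultrafilter on X. -/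
theorem stmt17 [TopologicalSpace X] [T35Space X] (f : X → ℝ) (hf : Continuous f) :
    IsRealcompact ↥({x : X | f x = 0}ᶜ) ↔
      ∀ U : Set (Set X), IsZUltrafilter U → HasCIP U → ¬ IsFixedFamily U →
        {x : X | f x = 0} ∈ U := by
  constructor
  · -- forward direction
    intro hrc U hU hcip hfree
    by_contra hZf
    obtain ⟨Z₀, hZ₀U, hdisj⟩ := ultra_exists_disjoint hU ⟨f, hf, rfl⟩ hZf
    have hZ₀S : ∀ x ∈ Z₀, x ∈ ({x : X | f x = 0}ᶜ) := by
      intro x hx hfx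
      exact absurd (show x ∈ {x : X | f x = 0} ∩ Z₀ from ⟨hfx, hx⟩)
        (by rw [hdisj]; exact notMem_empty x)
    set F : Set (Set ↥({x : X | f x = 0}ᶜ)) :=
      {W | IsZeroSet W ∧ ∃ Z ∈ U, Subtype.val ⁻¹' (Z ∩ Z₀) ⊆ W} with hFdef
    have hFz : IsZFilter F := by
      refine ⟨fun W hW => hW.1, ?_, ⟨zs_univ, univ, hU.1.2.2.1, subset_univ _⟩, ?_, ?_⟩
      · rintro ⟨-, Z, hZU, hsub⟩
        have hmem : Z ∩ Z₀ ∈ U := hU.1.2.2.2.1 Z hZU Z₀ hZ₀U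
        obtain ⟨x, hx⟩ := zf_mem_nonempty hU.1 hmem
        exact hsub (show (⟨x, hZ₀S x hx.2⟩ : ↥({x : X | f x = 0}ᶜ)) ∈
          Subtype.val ⁻¹' (Z ∩ Z₀) from hx)
      · rintro W₁ ⟨hz1, Z₁, hZ₁, hs1⟩ W₂ ⟨hz2, Z₂, hZ₂, hs2⟩
        refine ⟨zs_inter hz1 hz2, Z₁ ∩ Z₂, hU.1.2.2.2.1 Z₁ hZ₁ Z₂ hZ₂, ?_⟩
        rintro y ⟨⟨hy1, hy2⟩, hy0⟩
        exact ⟨hs1 ⟨hy1, hy0⟩, hs2 ⟨hy2, hy0⟩⟩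
      · rintro W₁ ⟨hz1, Z₁, hZ₁, hs1⟩ W₂ hz2 hsub
        exact ⟨hz2, Z₁, hZ₁, hs1.trans hsub⟩
    have hFprime : IsPrimeZFilter F := by
      refine ⟨hFz, fun W₁ W₂ hw1 hw2 hmem => ?_⟩
      obtain ⟨-, Z, hZU, hsub⟩ := hmem
      have hY1 := bridge hf hw1
      have hY2 := bridge hf hw2
      have hunion : (Subtype.val '' W₁ ∪ {x : X | f x = 0}) ∪
          (Subtype.val '' W₂ ∪ {x : X | f x = 0}) ∈ U := by
        apply hU.1.2.2.2.2 (Z ∩ Z₀) (hU.1.2.2.2.1 Z hZU Z₀ hZ₀U) _ (zs_union hY1 hY2)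
        intro x hx
        have hxS : x ∈ ({x : X | f x = 0}ᶜ) := hZ₀S x hx.2
        have hmem2 := hsub (show (⟨x, hxS⟩ : ↥({x : X | f x = 0}ᶜ)) ∈
          Subtype.val ⁻¹' (Z ∩ Z₀) from hx)
        rcases hmem2 with h | h
        · exact Or.inl (Or.inl ⟨⟨x, hxS⟩, h, rfl⟩)
        · exact Or.inr (Or.inl ⟨⟨x, hxS⟩, h, rfl⟩)
      have key : ∀ W : Set ↥({x : X | f x = 0}ᶜ), IsZeroSet W →
          (Subtype.val '' W ∪ {x : X | f x = 0}) ∈ U → W ∈ F := by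
        intro W hWz hWU
        refine ⟨hWz, (Subtype.val '' W ∪ {x : X | f x = 0}) ∩ Z₀,
          hU.1.2.2.2.1 _ hWU Z₀ hZ₀U, ?_⟩
        rintro y ⟨⟨hy1, hy2⟩, -⟩
        rcases hy1 with h | h
        · obtain ⟨w, hw, hwy⟩ := h
          rwa [show w = y from Subtype.ext hwy] at hw
        · exact absurd h (hZ₀S _ hy2)
      rcases (ultra_prime hU).2 _ _ hY1 hY2 hunion with h | h
      · exact Or.inl (key W₁ hw1 h)
      · exact Or.inr (key W₂ hw2 h)
    have hFcip : HasCIP F := by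
      intro t ht
      have ht' : ∀ n, IsZeroSet (t n) ∧ ∃ Z ∈ U, Subtype.val ⁻¹' (Z ∩ Z₀) ⊆ t n := ht
      choose hz Z hZU hZsub using ht'
      have hmem : ∀ n, Z n ∩ Z₀ ∈ U := fun n => hU.1.2.2.2.1 _ (hZU n) Z₀ hZ₀U
      obtain ⟨x, hx⟩ := hcip _ hmem
      have hx' := mem_iInter.mp hx
      have hxS : x ∈ ({x : X | f x = 0}ᶜ) := hZ₀S x (hx' 0).2
      refine ⟨⟨x, hxS⟩, mem_iInter.mpr fun n => ?_⟩
      exact hZsub n (hx' n)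
    obtain ⟨V, hV, hFV⟩ := exists_zultra_superset hFz
    have hVcip := primeCIP hFprime hFcip hV.1 hFV
    obtain ⟨q, hq⟩ := hrc V hV hVcip
    have hq' := mem_sInter.mp hq
    apply hfree
    refine ⟨q.1, mem_sInter.mpr fun Z hZ => ?_⟩
    have hmemF : Subtype.val ⁻¹' (Z ∩ Z₀) ∈ F :=
      ⟨zs_preimage continuous_subtype_val (zs_inter (hU.1.1 Z hZ) (hU.1.1 Z₀ hZ₀U)),
        Z, hZ, subset_rfl⟩
    exact (hq' _ (hFV hmemF)).1
  · -- backward direction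
    intro hyp V hV hVcip
    set U : Set (Set X) := {Z | IsZeroSet Z ∧ Subtype.val ⁻¹' Z ∈ V} with hUdef
    have hUz : IsZFilter U := by
      refine ⟨fun Z hZ => hZ.1, ?_,
        ⟨zs_univ, by rw [preimage_univ]; exact hV.1.2.2.1⟩, ?_, ?_⟩
      · rintro ⟨-, h⟩
        rw [preimage_empty] at h
        exact hV.1.2.1 h
      · rintro Z₁ ⟨hz1, h1⟩ Z₂ ⟨hz2, h2⟩
        exact ⟨zs_inter hz1 hz2, by rw [preimage_inter]; exact hV.1.2.2.2.1 _ h1 _ h2⟩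
      · rintro Z₁ ⟨hz1, h1⟩ Z₂ hz2 hsub
        exact ⟨hz2, hV.1.2.2.2.2 _ h1 _ (zs_preimage continuous_subtype_val hz2)
          (preimage_mono hsub)⟩
    have hUprime : IsPrimeZFilter U := by
      refine ⟨hUz, fun Z₁ Z₂ h1 h2 hmem => ?_⟩
      obtain ⟨-, hmem2⟩ := hmem
      rw [preimage_union] at hmem2
      rcases (ultra_prime hV).2 _ _ (zs_preimage continuous_subtype_val h1)
        (zs_preimage continuous_subtype_val h2) hmem2 with h | h
      · exact Or.inl ⟨h1, h⟩
      · exact Or.inr ⟨h2, h⟩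
    have hUcip : HasCIP U := by
      intro t ht
      have ht' : ∀ n, Subtype.val ⁻¹' (t n) ∈ V := fun n => (ht n).2
      obtain ⟨y, hy⟩ := hVcip _ ht'
      have hy' := mem_iInter.mp hy
      exact ⟨y.1, mem_iInter.mpr fun n => hy' n⟩
    have hA : ∃ n : ℕ, {x : X | 1 / ((n : ℝ) + 1) ≤ |f x|} ∈ U := by
      by_contra hno
      push_neg at hno
      have hB : ∀ n : ℕ,
          (Subtype.val ⁻¹' {x : X | |f x| ≤ 1 / ((n : ℝ) + 1)} : Set ↥({x : X | f x = 0}ᶜ)) ∈ V := by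
        intro n
        have hAz : IsZeroSet {x : X | 1 / ((n : ℝ) + 1) ≤ |f x|} := zs_ge hf.abs _
        have hBz : IsZeroSet {x : X | |f x| ≤ 1 / ((n : ℝ) + 1)} := zs_le hf.abs _
        have hunion : ((Subtype.val ⁻¹' {x : X | 1 / ((n : ℝ) + 1) ≤ |f x|} :
            Set ↥({x : X | f x = 0}ᶜ)) ∪
            (Subtype.val ⁻¹' {x : X | |f x| ≤ 1 / ((n : ℝ) + 1)})) ∈ V := by
          have : ((Subtype.val ⁻¹' {x : X | 1 / ((n : ℝ) + 1) ≤ |f x|} :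
              Set ↥({x : X | f x = 0}ᶜ)) ∪
              (Subtype.val ⁻¹' {x : X | |f x| ≤ 1 / ((n : ℝ) + 1)})) = univ := by
            ext y
            simp only [mem_union, mem_preimage, mem_setOf_eq, mem_univ, iff_true]
            exact (le_total (1 / ((n : ℝ) + 1)) |f y.1|).imp id id
          rw [this]; exact hV.1.2.2.1
        rcases (ultra_prime hV).2 _ _ (zs_preimage continuous_subtype_val hAz)
          (zs_preimage continuous_subtype_val hBz) hunion with h | h
        · exact absurd ⟨hAz, h⟩ (hno n)
        · exact h
      obtain ⟨y, hy⟩ := hVcip _ hB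
      have hy' := mem_iInter.mp hy
      have hfy : f y.1 ≠ 0 := y.2
      have hpos : 0 < |f y.1| := abs_pos.mpr hfy
      obtain ⟨k, hk⟩ := exists_nat_one_div_lt hpos
      exact absurd (hy' k) (not_le.mpr hk)
    obtain ⟨n, hAU⟩ := hA
    obtain ⟨Ut, hUt, hUUt⟩ := exists_zultra_superset hUz
    have hUtcip := primeCIP hUprime hUcip hUt.1 hUUt
    have hUtfix : IsFixedFamily Ut := by
      by_contra hfree
      have hZfUt := hyp Ut hUt hUtcip hfree
      have hint : {x : X | f x = 0} ∩ {x : X | 1 / ((n : ℝ) + 1) ≤ |f x|} ∈ Ut :=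
        hUt.1.2.2.2.1 _ hZfUt _ (hUUt hAU)
      have hempty : {x : X | f x = 0} ∩ {x : X | 1 / ((n : ℝ) + 1) ≤ |f x|} = ∅ := by
        ext x
        simp only [mem_inter_iff, mem_setOf_eq, mem_empty_iff_false, iff_false, not_and, not_le]
        intro h1
        rw [h1]
        simp only [abs_zero]
        positivity
      rw [hempty] at hint
      exact hUt.1.2.1 hint
    obtain ⟨p, hp⟩ := hUtfix
    have hp' := mem_sInter.mp hp
    have hpA : 1 / ((n : ℝ) + 1) ≤ |f p| := hp' _ (hUUt hAU)
    have hpS : p ∈ ({x : X | f x = 0}ᶜ) := by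
      intro h
      have h0 : |f p| = 0 := by rw [show f p = 0 from h]; exact abs_zero
      rw [h0] at hpA
      have : (0 : ℝ) < 1 / ((n : ℝ) + 1) := by positivity
      linarith
    refine ⟨⟨p, hpS⟩, mem_sInter.mpr fun W hW => ?_⟩
    have hWz := hV.1.1 W hW
    have hbU : Subtype.val '' W ∪ {x : X | f x = 0} ∈ U := by
      refine ⟨bridge hf hWz, ?_⟩
      have hpre : (Subtype.val ⁻¹' (Subtype.val '' W ∪ {x : X | f x = 0}) :
          Set ↥({x : X | f x = 0}ᶜ)) = W := by
        ext y
        simp only [mem_preimage, mem_union, mem_image, mem_setOf_eq]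
        constructor
        · rintro (⟨w, hw, hwy⟩ | h)
          · rwa [show w = y from Subtype.ext hwy] at hw
          · exact absurd h y.2
        · intro hyW
          exact Or.inl ⟨y, hyW, rfl⟩
      rw [hpre]
      exact hW
    have hmem := hp' _ (hUUt hbU)
    rcases hmem with h | h
    · obtain ⟨w, hw, hwp⟩ := h
      rwa [show w = (⟨p, hpS⟩ : ↥({x : X | f x = 0}ᶜ)) from Subtype.ext hwp] at hw
    · exact absurd h hpS
end
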